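/- arXiv:1102.5409 — 7 statements merged into one kernel-verified Lean document; each statement's English description precedes it below -/
import Mathlib

section
/- For nonnegative integers a, b, let T*_{a,b} be the tree of order n = 2a+b+1, and put β = a; then the Wiener index satisfies W(T*_{β, n−2β−1}) = n² + (β−2)n + (−3β+1). -/
open SimpleGraph Finset

/-- The Wiener index: sum of distances over all unordered pairs of vertices. -/
noncomputable def wienerIndex {V : Type*} [Fintype V] (G : SimpleGraph V) : ℕ :=
  (∑ u : V, ∑ v : V, G.dist u v) / 2

/-- The distance of a vertex: the sum of distances from `u` to all vertices. -/
noncomputable def vertexDist {V : Type*} [Fintype V] (G : SimpleGraph V) (u : V) : ℕ :=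
  ∑ v : V, G.dist u v

/-- The matching number: the maximum size of a matching. -/
noncomputable def matchingNumber {V : Type*} [Fintype V] (G : SimpleGraph V) : ℕ :=
  sSup {n | ∃ M : G.Subgraph, M.IsMatching ∧ M.edgeSet.ncard = n}

/-- The rooted tree `T*_{a,b}` of order `2a+b+1`: from the star `K_{1,a+b}` with root (center)
vertex `0`, leaves `1,…,a+b`, attach one pendant edge to each of the first `a` leaves
(vertex `i+a+b` is attached to leaf `i` for `1 ≤ i ≤ a`). -/
def Tstar (a b : ℕ) : SimpleGraph (Fin (2*a+b+1)) :=
  SimpleGraph.fromRel fun u v =>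
    (u.val = 0 ∧ 1 ≤ v.val ∧ v.val ≤ a + b) ∨
    (1 ≤ u.val ∧ u.val ≤ a ∧ v.val = u.val + a + b)

lemma dist_eq_of {V : Type*} (G : SimpleGraph V) (d : V → V → ℕ)
    (h0 : ∀ v, d v v = 0)
    (h0' : ∀ u v, d u v = 0 → u = v)
    (hstep : ∀ u v, d u v ≠ 0 → ∃ w, G.Adj u w ∧ d w v + 1 = d u v)
    (htri : ∀ u v w, G.Adj u w → d u v ≤ d w v + 1) :
    ∀ u v, G.dist u v = d u v := by
  have upper : ∀ k u v, d u v = k → ∃ p : G.Walk u v, p.length = d u v := by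
    intro k
    induction k with
    | zero => intro u v hk; obtain rfl := h0' u v hk; exact ⟨Walk.nil, by simp [h0]⟩
    | succ k ih =>
      intro u v hk
      obtain ⟨w, hadj, hw⟩ := hstep u v (by omega)
      obtain ⟨p, hp⟩ := ih w v (by omega)
      exact ⟨Walk.cons hadj p, by simp [hp]; omega⟩
  have lower : ∀ u v (p : G.Walk u v), d u v ≤ p.length := by
    intro u v p
    induction p with
    | nil => simp [h0]
    | cons h p ih =>
      exact (htri _ _ _ h).trans (by simp only [Walk.length_cons]; omega)
  intro u v
  obtain ⟨p, hp⟩ := upper (d u v) u v rfl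
  have h1 : G.dist u v ≤ d u v := hp ▸ SimpleGraph.dist_le p
  obtain ⟨q, hq⟩ := (Reachable.exists_walk_length_eq_dist ⟨p⟩ : _)
  have h2 := lower u v q
  omega


lemma Tstar_adj_iff (a b : ℕ) (u v : Fin (2*a+b+1)) :
    (Tstar a b).Adj u v ↔ u.val ≠ v.val ∧
      ((u.val = 0 ∧ 1 ≤ v.val ∧ v.val ≤ a + b) ∨
       (1 ≤ u.val ∧ u.val ≤ a ∧ v.val = u.val + a + b) ∨
       (v.val = 0 ∧ 1 ≤ u.val ∧ u.val ≤ a + b) ∨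
       (1 ≤ v.val ∧ v.val ≤ a ∧ u.val = v.val + a + b)) := by
  rw [Tstar, fromRel_adj]
  constructor
  · rintro ⟨hne, hr⟩
    exact ⟨fun he => hne (Fin.ext he), by tauto⟩
  · rintro ⟨hne, hr⟩
    exact ⟨fun he => hne (congrArg Fin.val he), by tauto⟩

def lev (m v : ℕ) : ℕ := (if 1 ≤ v then 1 else 0) + (if m + 1 ≤ v then 1 else 0)

def Dd (a b u v : ℕ) : ℕ :=
  if u = v then 0
  else if (1 ≤ u ∧ u + (a+b) = v) ∨ (1 ≤ v ∧ v + (a+b) = u) then 1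
  else lev (a+b) u + lev (a+b) v

lemma Dd_self (a b v : ℕ) : Dd a b v v = 0 := by simp [Dd]

lemma Dd_eq_zero (a b u v : ℕ) (h : Dd a b u v = 0) : u = v := by
  unfold Dd lev at h; split_ifs at h <;> omega

lemma Dd_step (a b : ℕ) (u v : Fin (2*a+b+1)) (h : Dd a b u.val v.val ≠ 0) :
    ∃ w, (Tstar a b).Adj u w ∧ Dd a b w.val v.val + 1 = Dd a b u.val v.val := by
  have hu := u.isLt
  have hv := v.isLt
  have hne : u.val ≠ v.val := fun he => h (by rw [he]; exact Dd_self a b v.val)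
  by_cases hA : (1 ≤ u.val ∧ u.val + (a+b) = v.val) ∨ (1 ≤ v.val ∧ v.val + (a+b) = u.val)
  · refine ⟨v, ?_, ?_⟩
    · rw [Tstar_adj_iff]; exact ⟨hne, by omega⟩
    · rw [Dd_self]; unfold Dd; split_ifs <;> omega
  · by_cases hu0 : u.val = 0
    · by_cases hv1 : v.val ≤ a + b
      · refine ⟨v, ?_, ?_⟩
        · rw [Tstar_adj_iff]; exact ⟨hne, by omega⟩
        · rw [Dd_self]; unfold Dd lev; split_ifs <;> omega
      · refine ⟨⟨v.val - (a+b), by omega⟩, ?_, ?_⟩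
        · rw [Tstar_adj_iff]; simp only [Fin.val_mk]
          exact ⟨by omega, Or.inl ⟨hu0, by omega, by omega⟩⟩
        · simp only [Fin.val_mk]; unfold Dd lev; split_ifs <;> omega
    · by_cases huL : u.val ≤ a + b
      · refine ⟨⟨0, by omega⟩, ?_, ?_⟩
        · rw [Tstar_adj_iff]; simp only [Fin.val_mk]
          exact ⟨hu0, Or.inr (Or.inr (Or.inl ⟨trivial, by omega, huL⟩))⟩
        · simp only [Fin.val_mk]; unfold Dd lev; split_ifs <;> omega
      · refine ⟨⟨u.val - (a+b), by omega⟩, ?_, ?_⟩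
        · rw [Tstar_adj_iff]; simp only [Fin.val_mk]
          exact ⟨by omega, Or.inr (Or.inr (Or.inr ⟨by omega, by omega, by omega⟩))⟩
        · simp only [Fin.val_mk]; unfold Dd lev; split_ifs <;> omega

lemma Dd_tri (a b : ℕ) (u v w : Fin (2*a+b+1)) (h : (Tstar a b).Adj u w) :
    Dd a b u.val v.val ≤ Dd a b w.val v.val + 1 := by
  have hu := u.isLt
  have hv := v.isLt
  have hw := w.isLt
  rw [Tstar_adj_iff] at h
  obtain ⟨hne, hr⟩ := h
  unfold Dd lev
  split_ifs <;> omega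

def Mm (a b u v : ℕ) : ℕ :=
  if (1 ≤ u ∧ u + (a+b) = v) ∨ (1 ≤ v ∧ v + (a+b) = u) then 2 else 0

lemma sum_if_eq (n c t : ℕ) : (∑ v ∈ range n, if c = v then t else 0) = if c < n then t else 0 := by
  rw [Finset.sum_ite_eq]; simp [Finset.mem_range]

lemma sum_geind (n k t : ℕ) : (∑ v ∈ range n, if k ≤ v then t else 0) = (n - k) * t := by
  induction n with
  | zero => simp
  | succ n ih =>
    rw [Finset.sum_range_succ, ih]
    by_cases h : k ≤ n
    · rw [if_pos h]
      have : n + 1 - k = (n - k) + 1 := by omega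
      rw [this, add_mul, one_mul]
    · rw [if_neg h]
      have h1 : n - k = 0 := by omega
      have h2 : n + 1 - k = 0 := by omega
      rw [h1, h2]; simp

lemma sum_lev (a b : ℕ) : ∑ v ∈ range (2*a+b+1), lev (a+b) v = 3*a+b := by
  unfold lev
  rw [Finset.sum_add_distrib, sum_geind, sum_geind]
  have : 2*a+b+1 - 1 = 2*a+b := by omega
  rw [this]
  have : 2*a+b+1 - (a+b+1) = a := by omega
  rw [this]; ring

lemma Mm_row (a b u : ℕ) (hu : u < 2*a+b+1) :
    ∑ v ∈ range (2*a+b+1), Mm a b u v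
      = (if 1 ≤ u ∧ u ≤ a then 2 else 0) + (if a+b+1 ≤ u then 2 else 0) := by
  have hsplit : ∀ v ∈ range (2*a+b+1), Mm a b u v =
      (if u + (a+b) = v then (if 1 ≤ u ∧ u ≤ a then 2 else 0) else 0)
      + (if u - (a+b) = v then (if a+b+1 ≤ u then 2 else 0) else 0) := by
    intro v hv; rw [mem_range] at hv; unfold Mm; split_ifs <;> omega
  rw [Finset.sum_congr rfl hsplit, Finset.sum_add_distrib, sum_if_eq, sum_if_eq]
  split_ifs <;> omega

lemma Mm_total (a b : ℕ) :
    ∑ u ∈ range (2*a+b+1), ∑ v ∈ range (2*a+b+1), Mm a b u v = 4*a := by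
  rw [Finset.sum_congr rfl (fun u hu => Mm_row a b u (mem_range.mp hu)),
    Finset.sum_add_distrib, sum_geind]
  have key : ((∑ u ∈ range (2*a+b+1), if 1 ≤ u ∧ u ≤ a then 2 else 0) +
      ∑ u ∈ range (2*a+b+1), if a+1 ≤ u then 2 else 0) =
      ∑ u ∈ range (2*a+b+1), if 1 ≤ u then 2 else 0 := by
    rw [← Finset.sum_add_distrib]
    exact Finset.sum_congr rfl fun u _ => by split_ifs <;> omega
  rw [sum_geind, sum_geind] at key
  omega

lemma Dd_split (a b u v : ℕ) (hu : u < 2*a+b+1) (hv : v < 2*a+b+1) :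
    Dd a b u v + Mm a b u v + (if u = v then lev (a+b) u + lev (a+b) v else 0)
      = lev (a+b) u + lev (a+b) v := by
  unfold Dd Mm lev; split_ifs <;> omega

lemma Dd_total (a b : ℕ) :
    (∑ u ∈ range (2*a+b+1), ∑ v ∈ range (2*a+b+1), Dd a b u v) + 4*a
      = 2*((2*a+b)*(3*a+b)) := by
  have hsum : ∑ u ∈ range (2*a+b+1), ∑ v ∈ range (2*a+b+1),
      (Dd a b u v + Mm a b u v + (if u = v then lev (a+b) u + lev (a+b) v else 0))
      = ∑ u ∈ range (2*a+b+1), ∑ v ∈ range (2*a+b+1), (lev (a+b) u + lev (a+b) v) :=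
    Finset.sum_congr rfl fun u hu => Finset.sum_congr rfl fun v hv =>
      Dd_split a b u v (mem_range.mp hu) (mem_range.mp hv)
  simp only [Finset.sum_add_distrib] at hsum
  rw [Mm_total] at hsum
  have hdiag : ∑ u ∈ range (2*a+b+1), ∑ v ∈ range (2*a+b+1),
      (if u = v then lev (a+b) u + lev (a+b) v else 0)
      = ∑ u ∈ range (2*a+b+1), 2 * lev (a+b) u := by
    refine Finset.sum_congr rfl fun u hu => ?_
    rw [Finset.sum_ite_eq]
    rw [if_pos hu]; omega
  rw [hdiag] at hsum
  have h2lev : ∑ u ∈ range (2*a+b+1), 2 * lev (a+b) u = 2*(3*a+b) := by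
    rw [← Finset.mul_sum, sum_lev]
  rw [h2lev] at hsum
  have hconstu : ∑ u ∈ range (2*a+b+1), ∑ _v ∈ range (2*a+b+1), lev (a+b) u
      = (2*a+b+1) * (3*a+b) := by
    simp only [Finset.sum_const, Finset.card_range, smul_eq_mul]
    rw [← Finset.mul_sum, sum_lev]
  have hconstv : ∑ _u ∈ range (2*a+b+1), ∑ v ∈ range (2*a+b+1), lev (a+b) v
      = (2*a+b+1) * (3*a+b) := by
    rw [sum_lev, Finset.sum_const, Finset.card_range, smul_eq_mul]
  rw [hconstu, hconstv] at hsum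
  have hr : 2*((2*a+b+1)*(3*a+b)) = 2*((2*a+b)*(3*a+b)) + 2*(3*a+b) := by ring
  generalize hP : (2*a+b)*(3*a+b) = P at *
  generalize hQ : (2*a+b+1)*(3*a+b) = Q at *
  omega

lemma wiener_key (a b : ℕ) :
    (wienerIndex (Tstar a b) : ℤ) = (2*a+b)*(3*a+b) - 2*a := by
  have hdist : ∀ u v : Fin (2*a+b+1), (Tstar a b).dist u v = Dd a b u.val v.val :=
    dist_eq_of (Tstar a b) (fun u v => Dd a b u.val v.val)
      (fun v => Dd_self a b v.val)
      (fun u v h => Fin.ext (Dd_eq_zero a b u.val v.val h))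
      (Dd_step a b) (fun u v w h => Dd_tri a b u v w h)
  have hW : wienerIndex (Tstar a b)
      = (∑ u ∈ range (2*a+b+1), ∑ v ∈ range (2*a+b+1), Dd a b u v) / 2 := by
    unfold wienerIndex
    simp only [hdist]
    have hinner : ∀ x : ℕ, (∑ v : Fin (2*a+b+1), Dd a b x v.val)
        = ∑ y ∈ range (2*a+b+1), Dd a b x y := fun x =>
      Fin.sum_univ_eq_sum_range (fun y => Dd a b x y) (2*a+b+1)
    simp only [hinner]
    rw [Fin.sum_univ_eq_sum_range (fun x => ∑ y ∈ range (2*a+b+1), Dd a b x y)]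
  have hT := Dd_total a b
  have hle : 2*a ≤ (2*a+b)*(3*a+b) := by
    rcases Nat.eq_zero_or_pos (3*a+b) with h0 | h0
    · omega
    · calc 2*a ≤ (2*a+b) * 1 := by omega
        _ ≤ (2*a+b)*(3*a+b) := Nat.mul_le_mul_left _ h0
  have hWval : wienerIndex (Tstar a b) = (2*a+b)*(3*a+b) - 2*a := by
    rw [hW]
    generalize hP : (2*a+b)*(3*a+b) = P at *
    omega
  rw [hWval]
  push_cast [Nat.cast_sub hle]
  ring


/-- `W(T*_{β, n−2β−1}) = n² + (β−2)n − 3β + 1` for `n ≥ 2β+1`. -/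
theorem wiener_Tstar (n β : ℕ) (h : 2 * β + 1 ≤ n) :
    (wienerIndex (Tstar β (n - 2*β - 1)) : ℤ) =
      (n : ℤ)^2 + ((β : ℤ) - 2) * n + (-3 * (β : ℤ) + 1) := by
  rw [wiener_key]
  have hb : ((n - 2*β - 1 : ℕ) : ℤ) = (n:ℤ) - 2*β - 1 := by omega
  push_cast [hb]
  ring
end

section
/- Let T be a tree of order n with matching number β and let u be a vertex such that u is covered by some maximum matching via an edge of T. If u is adjacent to more than n − β vertices, then the matching number of T would be less than β; hence d_T(u) ≥ n + β − 2, where d_T(u) is the sum of distances from u to all other vertices. -/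
open SimpleGraph Finset

/-- In a tree, no triangles. -/
lemma tree_no_triangle {V : Type*} {T : SimpleGraph V} (hT : T.IsTree)
    {u x y : V} (hux : T.Adj u x) (huy : T.Adj u y) (hxy : T.Adj x y) : False := by
  have h1 : (SimpleGraph.Walk.cons hxy SimpleGraph.Walk.nil : T.Walk x y).IsPath := by
    simp [SimpleGraph.Walk.isPath_def, hxy.ne]
  have h2 : (SimpleGraph.Walk.cons hux.symm
      (SimpleGraph.Walk.cons huy SimpleGraph.Walk.nil) : T.Walk x y).IsPath := by
    simp [SimpleGraph.Walk.isPath_def, hux.ne', huy.ne, hxy.ne]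
  have huniq := hT.existsUnique_path x y
  obtain ⟨p, _, hp⟩ := huniq
  have e1 := hp _ h1
  have e2 := hp _ h2
  rw [← e2] at e1
  have := congrArg SimpleGraph.Walk.length e1
  simp [SimpleGraph.Walk.length_cons] at this

/-- For a tree `T` of order `n` with matching number `β ≥ 1` and any vertex `u`,
`d_T(u) ≥ n + β − 2`. -/
theorem vertexDist_lower_bound {V : Type*} [Fintype V]
    (T : SimpleGraph V) (hT : T.IsTree) (n β : ℕ) (hn : Fintype.card V = n)
    (hβ : matchingNumber T = β) (hβ1 : 1 ≤ β) (u : V) :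
    (vertexDist T u : ℤ) ≥ (n : ℤ) + β - 2 := by
  classical
  set Sf : Finset V := Finset.univ.filter (fun v => ¬ T.Adj u v) with hSf
  -- Step A : β ≤ Sf.card
  have hA : β ≤ Sf.card := by
    -- get a maximum matching
    have hne : {m | ∃ M : T.Subgraph, M.IsMatching ∧ M.edgeSet.ncard = m}.Nonempty := by
      refine ⟨0, ⊥, ?_, ?_⟩
      · intro v hv; simp at hv
      · simp
    have hbdd : BddAbove {m | ∃ M : T.Subgraph, M.IsMatching ∧ M.edgeSet.ncard = m} := by
      refine ⟨Fintype.card (Sym2 V), ?_⟩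
      rintro m ⟨M, hM, rfl⟩
      calc M.edgeSet.ncard ≤ (Set.univ : Set (Sym2 V)).ncard :=
            Set.ncard_le_ncard (Set.subset_univ _) Set.finite_univ
        _ = Fintype.card (Sym2 V) := by rw [Set.ncard_univ, Nat.card_eq_fintype_card]
    have hmem := Nat.sSup_mem hne hbdd
    rw [show sSup {m | ∃ M : T.Subgraph, M.IsMatching ∧ M.edgeSet.ncard = m}
        = matchingNumber T from rfl, hβ] at hmem
    obtain ⟨M, hM, hMcard⟩ := hmem
    -- inject edges into Sf
    set f : Sym2 V → V := fun e =>
      if h : ∃ v, v ∈ e ∧ ¬ T.Adj u v then h.choose else u with hf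
    have hex : ∀ e ∈ M.edgeSet, ∃ v, v ∈ e ∧ ¬ T.Adj u v := by
      intro e he
      have heT : e ∈ T.edgeSet := M.edgeSet_subset he
      induction e with
      | h x y =>
        rw [SimpleGraph.mem_edgeSet] at heT
        by_cases h1 : T.Adj u x
        · by_cases h2 : T.Adj u y
          · exact absurd (tree_no_triangle hT h1 h2 heT) (by simp)
          · exact ⟨y, by simp, h2⟩
        · exact ⟨x, by simp, h1⟩
    have hfmem : ∀ e ∈ M.edgeSet, f e ∈ e ∧ ¬ T.Adj u (f e) := by
      intro e he
      have h := hex e he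
      simp only [hf, dif_pos h]
      exact h.choose_spec
    have hmaps : ∀ e ∈ M.edgeSet, f e ∈ (↑Sf : Set V) := by
      intro e he
      have := (hfmem e he).2
      simp [hSf, this]
    have hinj : Set.InjOn f M.edgeSet := by
      intro e1 he1 e2 he2 hfe
      have h1 := hfmem e1 he1
      have h2 := hfmem e2 he2
      rw [hfe] at h1
      set v := f e2
      -- v belongs to both matching edges
      have key : ∀ e ∈ M.edgeSet, v ∈ e → ∃ w, M.Adj v w ∧ e = s(v, w) := by
        intro e he hv
        induction e with
        | h x y =>
          rw [SimpleGraph.Subgraph.mem_edgeSet] at he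
          rcases Sym2.mem_iff.mp hv with rfl | rfl
          · exact ⟨y, he, rfl⟩
          · exact ⟨x, he.symm, Sym2.eq_swap⟩
      obtain ⟨w1, hw1, he1eq⟩ := key e1 he1 h1.1
      obtain ⟨w2, hw2, he2eq⟩ := key e2 he2 h2.1
      have hv : v ∈ M.verts := hw1.fst_mem
      obtain ⟨w, -, huniq⟩ := hM hv
      rw [he1eq, he2eq, huniq w1 hw1, huniq w2 hw2]
    calc β = M.edgeSet.ncard := hMcard.symm
      _ ≤ (↑Sf : Set V).ncard := Set.ncard_le_ncard_of_injOn f hmaps hinj (Set.toFinite _)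
      _ = Sf.card := Set.ncard_coe_finset _
  -- Step B : sum of distances bound
  have hub : ∀ v : V, (if v = u then (0:ℤ) else if T.Adj u v then 1 else 2) ≤ (T.dist u v : ℤ) := by
    intro v
    by_cases hv : v = u
    · simp [hv]
    · by_cases ha : T.Adj u v
      · rw [if_neg hv, if_pos ha, (SimpleGraph.dist_eq_one_iff_adj (G := T)).mpr ha]
        norm_num
      · rw [if_neg hv, if_neg ha]
        have hpos : 0 < T.dist u v :=
          hT.isConnected.pos_dist_of_ne (fun h => hv h.symm)
        have hne1 : T.dist u v ≠ 1 := fun h =>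
          ha ((SimpleGraph.dist_eq_one_iff_adj (G := T)).mp h)
        have : 2 ≤ T.dist u v := by omega
        exact_mod_cast this
  have hsum : ((n : ℤ) + Sf.card - 2) ≤ (vertexDist T u : ℤ) := by
    have h1 : (∑ v : V, (if v = u then (0:ℤ) else if T.Adj u v then 1 else 2))
        ≤ ∑ v : V, (T.dist u v : ℤ) := Finset.sum_le_sum (fun v _ => hub v)
    have h2 : (∑ v : V, (if v = u then (0:ℤ) else if T.Adj u v then 1 else 2))
        = (∑ v : V, (if T.Adj u v then (1:ℤ) else 2)) - 2 := by
      have : ∀ v : V, (if v = u then (0:ℤ) else if T.Adj u v then 1 else 2)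
          = (if T.Adj u v then (1:ℤ) else 2) - (if v = u then 2 else 0) := by
        intro v
        by_cases hv : v = u
        · subst hv; simp [T.irrefl]
        · simp [hv]
      rw [Finset.sum_congr rfl (fun v _ => this v), Finset.sum_sub_distrib,
        Finset.sum_ite_eq' Finset.univ u (fun _ => (2:ℤ))]
      simp
    have h3 : (∑ v : V, (if T.Adj u v then (1:ℤ) else 2))
        = (Finset.univ.filter (fun v => T.Adj u v)).card + 2 * Sf.card := by
      rw [Finset.sum_ite, Finset.sum_const, Finset.sum_const]
      simp [hSf, mul_comm]
    have h4 : (Finset.univ.filter (fun v => T.Adj u v)).card + Sf.card = n := by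
      rw [hSf, Finset.card_filter_add_card_filter_not, Finset.card_univ, hn]
    have h5 : (vertexDist T u : ℤ) = ∑ v : V, (T.dist u v : ℤ) := by
      rw [vertexDist]; push_cast; ring
    have h4' : ((Finset.univ.filter (fun v => T.Adj u v)).card : ℤ) + Sf.card = n := by
      exact_mod_cast h4
    rw [h5]
    linarith [h1, h2 ▸ h1]
  have : (β : ℤ) ≤ Sf.card := by exact_mod_cast hA
  linarith
end

section
/- Let G be a unicyclic graph of order n whose unique cycle is C_g = u₁u₂⋯u_g, and let T₁,…,T_g be the branches (connected components of G − E(C_g)) with u_i ∈ T_i and |V(T_i)| = n_i. Then W(G) = Σ_{i=1}^g W(T_i) + Σ_{1≤i<j≤g} [n_j·d_{T_i}(u_i) + n_i·d_{T_j}(u_j) + n_i·n_j·d_{C_g}(u_i,u_j)]. -/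
open SimpleGraph Finset

/-- The unicyclic graph `U(T₁,…,T_g)`: from the cycle `C_g` on vertices `u₀,…,u_{g-1}`,
identify `u_i` with the root `r i` of the tree `T i`.  The vertex set is the disjoint
union `Σ i, V i`; the edges are the tree edges inside each branch together with the cycle
edges joining consecutive roots. -/
def cycleTrees {g : ℕ} [NeZero g] {V : Fin g → Type*} (T : ∀ i, SimpleGraph (V i)) (r : ∀ i, V i) :
    SimpleGraph (Σ i, V i) :=
  SimpleGraph.fromRel fun a b =>
    (∃ (i : Fin g) (x y : V i), a = ⟨i, x⟩ ∧ b = ⟨i, y⟩ ∧ (T i).Adj x y) ∨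
    (∃ i : Fin g, a = ⟨i, r i⟩ ∧ b = ⟨i + 1, r (i + 1)⟩)

namespace CycleTreesAux

/-! ### Generic combinatorial helpers -/

lemma double_sum_symm {α : Type*} [Fintype α] [LinearOrder α] (f : α → α → ℕ)
    (hsym : ∀ i j, f i j = f j i) :
    ∑ i, ∑ j, f i j =
      (∑ i, f i i) + 2 * ∑ i, ∑ j ∈ Finset.univ.filter (fun j => i < j), f i j := by
  have hsplit : ∀ i : α, ∑ j, f i j =
      f i i + (∑ j ∈ Finset.univ.filter (fun j => i < j), f i j +
        ∑ j ∈ Finset.univ.filter (fun j => j < i), f i j) := by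
    intro i
    have huniv : (Finset.univ : Finset α) =
        insert i ((Finset.univ.filter (fun j => i < j)) ∪
          (Finset.univ.filter (fun j => j < i))) := by
      ext j
      simp only [Finset.mem_univ, Finset.mem_insert, Finset.mem_union, Finset.mem_filter,
        true_and, true_iff]
      rcases lt_trichotomy i j with h | h | h
      · exact Or.inr (Or.inl h)
      · exact Or.inl h.symm
      · exact Or.inr (Or.inr h)
    have hdisj : Disjoint (Finset.univ.filter (fun j => i < j))
        (Finset.univ.filter (fun j => j < i)) := by
      rw [Finset.disjoint_left]
      intro j h1 h2
      simp only [Finset.mem_filter, Finset.mem_univ, true_and] at h1 h2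
      exact lt_asymm h1 h2
    have hmem : i ∉ (Finset.univ.filter (fun j => i < j)) ∪
        (Finset.univ.filter (fun j => j < i)) := by
      simp only [Finset.mem_union, Finset.mem_filter, Finset.mem_univ, true_and, not_or]
      exact ⟨lt_irrefl i, lt_irrefl i⟩
    conv_lhs => rw [huniv]
    rw [Finset.sum_insert hmem, Finset.sum_union hdisj]
  have hswap : ∑ i, ∑ j ∈ Finset.univ.filter (fun j => j < i), f i j =
      ∑ i, ∑ j ∈ Finset.univ.filter (fun j => i < j), f i j := by
    rw [Finset.sum_comm' (t' := Finset.univ)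
      (s' := fun y => Finset.univ.filter (fun x => y < x))
      (by intro x y; simp)]
    exact Finset.sum_congr rfl fun i _ => Finset.sum_congr rfl fun j _ => hsym j i
  calc ∑ i, ∑ j, f i j
      = ∑ i, (f i i + (∑ j ∈ Finset.univ.filter (fun j => i < j), f i j +
          ∑ j ∈ Finset.univ.filter (fun j => j < i), f i j)) :=
        Finset.sum_congr rfl fun i _ => hsplit i
    _ = (∑ i, f i i) + ((∑ i, ∑ j ∈ Finset.univ.filter (fun j => i < j), f i j) +
          ∑ i, ∑ j ∈ Finset.univ.filter (fun j => j < i), f i j) := by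
        rw [Finset.sum_add_distrib, Finset.sum_add_distrib]
    _ = _ := by rw [hswap]; ring

lemma sum_dist_eq_two_mul_wiener {W : Type*} [Fintype W] (G : SimpleGraph W) :
    ∑ u : W, ∑ v : W, G.dist u v = 2 * wienerIndex G := by
  suffices h : 2 ∣ ∑ u : W, ∑ v : W, G.dist u v by
    rw [wienerIndex]; exact (Nat.mul_div_cancel' h).symm
  let e := (Fintype.equivFin W).symm
  have htrans : ∑ u : W, ∑ v : W, G.dist u v =
      ∑ a : Fin (Fintype.card W), ∑ b : Fin (Fintype.card W), G.dist (e a) (e b) := by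
    rw [← Equiv.sum_comp e (fun u => ∑ v : W, G.dist u v)]
    exact Finset.sum_congr rfl fun a _ => (Equiv.sum_comp e (fun v => G.dist (e a) v)).symm
  rw [htrans, double_sum_symm _ (fun i j => G.dist_comm)]
  simp [SimpleGraph.dist_self]

/-! ### Cycle graph helpers -/

lemma cycConn {g : ℕ} (hg : 3 ≤ g) : (cycleGraph g).Connected := by
  cases g with
  | zero => omega
  | succ n => exact cycleGraph_connected

lemma succ_ne {g : ℕ} [NeZero g] (hg : 3 ≤ g) (k : Fin g) : k + 1 ≠ k := by
  intro h
  have h1 : (1 : Fin g) = 0 := add_eq_left.mp h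
  have := Fin.one_eq_zero_iff.mp h1
  omega

lemma cyc_adj_succ {g : ℕ} [NeZero g] (hg : 3 ≤ g) (k : Fin g) :
    (cycleGraph g).Adj k (k + 1) := by
  obtain ⟨m, rfl⟩ : ∃ m, g = m + 3 := ⟨g - 3, by omega⟩
  exact cycleGraph_adj.mpr (Or.inr (add_sub_cancel_left k 1))

lemma cyc_adj_cases {g : ℕ} [NeZero g] (hg : 3 ≤ g) {a b : Fin g}
    (h : (cycleGraph g).Adj a b) : b = a + 1 ∨ a = b + 1 := by
  obtain ⟨m, rfl⟩ : ∃ m, g = m + 3 := ⟨g - 3, by omega⟩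
  rcases cycleGraph_adj.mp h with h1 | h1
  · exact Or.inr ((sub_eq_iff_eq_add.mp h1).trans (add_comm 1 b))
  · exact Or.inl ((sub_eq_iff_eq_add.mp h1).trans (add_comm 1 a))

/-! ### Projections, homomorphisms, connectivity -/

variable {g : ℕ} [NeZero g] {V : Fin g → Type*} (T : ∀ i, SimpleGraph (V i)) (r : ∀ i, V i)

/-- Project a vertex of the sigma type onto branch `i`, sending everything outside
branch `i` to the root `r i`. -/
def proj (i : Fin g) (a : Σ j, V j) : V i := if h : a.1 = i then h ▸ a.2 else r i

@[simp] lemma proj_mk_self (i : Fin g) (x : V i) : proj r i ⟨i, x⟩ = x := dif_pos rfl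

lemma proj_mk_ne {i j : Fin g} (h : j ≠ i) (x : V j) : proj r i ⟨j, x⟩ = r i := dif_neg h

@[simp] lemma proj_mk_root (m k : Fin g) : proj r m ⟨k, r k⟩ = r m := by
  rcases eq_or_ne k m with rfl | h
  · exact proj_mk_self r k (r k)
  · exact proj_mk_ne r h _

lemma adj_tree {i : Fin g} {x y : V i} (h : (T i).Adj x y) :
    (cycleTrees T r).Adj ⟨i, x⟩ ⟨i, y⟩ := by
  rw [cycleTrees, fromRel_adj]
  refine ⟨?_, Or.inl (Or.inl ⟨i, x, y, rfl, rfl, h⟩)⟩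
  intro hc
  have h2 := congrArg (proj r i) hc
  rw [proj_mk_self, proj_mk_self] at h2
  exact h.ne h2

lemma adj_cyc (hg : 3 ≤ g) (k : Fin g) :
    (cycleTrees T r).Adj ⟨k, r k⟩ ⟨k + 1, r (k + 1)⟩ := by
  rw [cycleTrees, fromRel_adj]
  refine ⟨?_, Or.inl (Or.inr ⟨k, rfl, rfl⟩)⟩
  intro hc
  exact succ_ne hg k (congrArg Sigma.fst hc).symm

/-- Inclusion of a branch as a graph homomorphism. -/
def branchHom (i : Fin g) : T i →g cycleTrees T r where
  toFun x := ⟨i, x⟩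
  map_rel' h := adj_tree T r h

/-- Inclusion of the cycle (through the roots) as a graph homomorphism. -/
def cycleHom (hg : 3 ≤ g) : cycleGraph g →g cycleTrees T r where
  toFun k := ⟨k, r k⟩
  map_rel' := by
    intro a b h
    rcases cyc_adj_cases hg h with h1 | h1
    · subst h1; exact adj_cyc T r hg a
    · subst h1; exact (adj_cyc T r hg b).symm

lemma dist_mk_le_tree (hT : ∀ i, (T i).IsTree) (i : Fin g) (x y : V i) :
    (cycleTrees T r).dist ⟨i, x⟩ ⟨i, y⟩ ≤ (T i).dist x y := by
  obtain ⟨p, hp⟩ := (hT i).isConnected.exists_walk_length_eq_dist x y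
  calc (cycleTrees T r).dist ⟨i, x⟩ ⟨i, y⟩ ≤ (p.map (branchHom T r i)).length :=
        SimpleGraph.dist_le _
    _ = (T i).dist x y := by rw [SimpleGraph.Walk.length_map, hp]

lemma dist_root_le (hg : 3 ≤ g) (i j : Fin g) :
    (cycleTrees T r).dist ⟨i, r i⟩ ⟨j, r j⟩ ≤ (cycleGraph g).dist i j := by
  obtain ⟨p, hp⟩ := (cycConn hg).exists_walk_length_eq_dist i j
  calc (cycleTrees T r).dist ⟨i, r i⟩ ⟨j, r j⟩ ≤ (p.map (cycleHom T r hg)).length :=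
        SimpleGraph.dist_le _
    _ = (cycleGraph g).dist i j := by rw [SimpleGraph.Walk.length_map, hp]

lemma reach_root (hT : ∀ i, (T i).IsTree) (i : Fin g) (x : V i) :
    (cycleTrees T r).Reachable ⟨i, x⟩ ⟨i, r i⟩ :=
  ((hT i).isConnected.preconnected x (r i)).map (branchHom T r i)

lemma cycleTrees_connected (hT : ∀ i, (T i).IsTree) (hg : 3 ≤ g) :
    (cycleTrees T r).Connected := by
  have hne : Nonempty (Σ j, V j) := ⟨⟨0, ((hT 0).isConnected.nonempty).some⟩⟩
  rw [SimpleGraph.connected_iff]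
  refine ⟨?_, hne⟩
  rintro ⟨i, x⟩ ⟨j, y⟩
  refine (reach_root T r hT i x).trans (Reachable.trans ?_ (reach_root T r hT j y).symm)
  exact ((cycConn hg).preconnected i j).map (cycleHom T r hg)

/-! ### The distance potential -/

/-- Sum of the cycle distance of the first components and the branch distances of all
projections; this equals the distance in `cycleTrees`. -/
noncomputable def Dfun (a b : Σ j, V j) : ℕ :=
  (cycleGraph g).dist a.1 b.1 + ∑ i, (T i).dist (proj r i a) (proj r i b)

lemma Dfun_self (a : Σ j, V j) : Dfun T r a a = 0 := by
  simp [Dfun, SimpleGraph.dist_self]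

lemma Dfun_comm (a b : Σ j, V j) : Dfun T r a b = Dfun T r b a := by
  unfold Dfun
  rw [SimpleGraph.dist_comm]
  congr 1
  exact Finset.sum_congr rfl fun i _ => SimpleGraph.dist_comm

lemma Dfun_triangle (hT : ∀ i, (T i).IsTree) (hg : 3 ≤ g) (a b c : Σ j, V j) :
    Dfun T r a c ≤ Dfun T r a b + Dfun T r b c := by
  unfold Dfun
  have h1 : (cycleGraph g).dist a.1 c.1 ≤
      (cycleGraph g).dist a.1 b.1 + (cycleGraph g).dist b.1 c.1 :=
    (cycConn hg).dist_triangle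
  have h2 : ∑ i, (T i).dist (proj r i a) (proj r i c) ≤
      (∑ i, (T i).dist (proj r i a) (proj r i b)) +
        ∑ i, (T i).dist (proj r i b) (proj r i c) := by
    rw [← Finset.sum_add_distrib]
    exact Finset.sum_le_sum fun i _ => (hT i).isConnected.dist_triangle
  omega

lemma Dfun_mk_same (i : Fin g) (x y : V i) :
    Dfun T r ⟨i, x⟩ ⟨i, y⟩ = (T i).dist x y := by
  unfold Dfun
  dsimp only
  rw [SimpleGraph.dist_self, zero_add, Finset.sum_eq_single i]
  · rw [proj_mk_self, proj_mk_self]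
  · intro k _ hk
    rw [proj_mk_ne r (Ne.symm hk), proj_mk_ne r (Ne.symm hk), SimpleGraph.dist_self]
  · intro h; exact absurd (Finset.mem_univ i) h

lemma Dfun_mk_ne {i j : Fin g} (hij : i ≠ j) (x : V i) (y : V j) :
    Dfun T r ⟨i, x⟩ ⟨j, y⟩ =
      (T i).dist x (r i) + (T j).dist (r j) y + (cycleGraph g).dist i j := by
  unfold Dfun
  dsimp only
  have hsum : ∑ k, (T k).dist (proj r k ⟨i, x⟩) (proj r k ⟨j, y⟩) =
      (T i).dist x (r i) + (T j).dist (r j) y := by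
    rw [← Finset.sum_subset (Finset.subset_univ ({i, j} : Finset (Fin g)))]
    · rw [Finset.sum_pair hij, proj_mk_self, proj_mk_ne r hij, proj_mk_ne r (Ne.symm hij),
        proj_mk_self]
    · intro k _ hk
      simp only [Finset.mem_insert, Finset.mem_singleton, not_or] at hk
      rw [proj_mk_ne r (Ne.symm hk.1), proj_mk_ne r (Ne.symm hk.2), SimpleGraph.dist_self]
  rw [hsum]
  omega

lemma Dfun_step (hg : 3 ≤ g) {a b : Σ j, V j} (h : (cycleTrees T r).Adj a b) :
    Dfun T r a b ≤ 1 := by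
  rw [cycleTrees, fromRel_adj] at h
  obtain ⟨hne, hrel⟩ := h
  have key : ∀ a b : Σ j, V j,
      ((∃ (i : Fin g) (x y : V i), a = ⟨i, x⟩ ∧ b = ⟨i, y⟩ ∧ (T i).Adj x y) ∨
        (∃ i : Fin g, a = ⟨i, r i⟩ ∧ b = ⟨i + 1, r (i + 1)⟩)) → Dfun T r a b ≤ 1 := by
    rintro a b (⟨i, x, y, rfl, rfl, hxy⟩ | ⟨k, rfl, rfl⟩)
    · rw [Dfun_mk_same, SimpleGraph.dist_eq_one_iff_adj.mpr hxy]
    · unfold Dfun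
      dsimp only
      have h1 : (cycleGraph g).dist k (k + 1) = 1 :=
        SimpleGraph.dist_eq_one_iff_adj.mpr (cyc_adj_succ hg k)
      have h2 : ∑ m, (T m).dist (proj r m ⟨k, r k⟩) (proj r m ⟨k + 1, r (k + 1)⟩) = 0 :=
        Finset.sum_eq_zero fun m _ => by
          rw [proj_mk_root, proj_mk_root, SimpleGraph.dist_self]
      rw [h1, h2]
  rcases hrel with h | h
  · exact key a b h
  · rw [Dfun_comm]; exact key b a h

lemma Dfun_le_length (hT : ∀ i, (T i).IsTree) (hg : 3 ≤ g) {a b : Σ j, V j}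
    (w : (cycleTrees T r).Walk a b) : Dfun T r a b ≤ w.length := by
  induction w with
  | nil => rw [Dfun_self]; exact Nat.zero_le _
  | @cons u c b h p ih =>
    calc Dfun T r u b ≤ Dfun T r u c + Dfun T r c b := Dfun_triangle T r hT hg u c b
      _ ≤ 1 + p.length := Nat.add_le_add (Dfun_step T r hg h) ih
      _ = (SimpleGraph.Walk.cons h p).length := by rw [SimpleGraph.Walk.length_cons]; omega

lemma Dfun_le_dist (hT : ∀ i, (T i).IsTree) (hg : 3 ≤ g) (a b : Σ j, V j) :
    Dfun T r a b ≤ (cycleTrees T r).dist a b := by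
  obtain ⟨w, hw⟩ := (cycleTrees_connected T r hT hg).exists_walk_length_eq_dist a b
  rw [← hw]
  exact Dfun_le_length T r hT hg w

lemma dist_mk_same (hT : ∀ i, (T i).IsTree) (hg : 3 ≤ g) (i : Fin g) (x y : V i) :
    (cycleTrees T r).dist ⟨i, x⟩ ⟨i, y⟩ = (T i).dist x y := by
  refine le_antisymm (dist_mk_le_tree T r hT i x y) ?_
  rw [← Dfun_mk_same T r i x y]
  exact Dfun_le_dist T r hT hg _ _

lemma dist_mk_ne (hT : ∀ i, (T i).IsTree) (hg : 3 ≤ g) {i j : Fin g} (hij : i ≠ j)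
    (x : V i) (y : V j) :
    (cycleTrees T r).dist ⟨i, x⟩ ⟨j, y⟩ =
      (T i).dist x (r i) + (T j).dist (r j) y + (cycleGraph g).dist i j := by
  refine le_antisymm ?_ ?_
  · have hconn := cycleTrees_connected T r hT hg
    have t1 : (cycleTrees T r).dist ⟨i, x⟩ ⟨j, y⟩ ≤
        (cycleTrees T r).dist ⟨i, x⟩ ⟨i, r i⟩ +
          ((cycleTrees T r).dist ⟨i, r i⟩ ⟨j, r j⟩ +
            (cycleTrees T r).dist ⟨j, r j⟩ ⟨j, y⟩) :=
      le_trans hconn.dist_triangle (Nat.add_le_add_left hconn.dist_triangle _)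
    have u1 := dist_mk_le_tree T r hT i x (r i)
    have u2 := dist_root_le T r hg i j
    have u3 := dist_mk_le_tree T r hT j (r j) y
    omega
  · rw [← Dfun_mk_ne T r hij x y]
    exact Dfun_le_dist T r hT hg _ _

end CycleTreesAux

/-- Lemma 2.1: the Wiener index of a unicyclic graph `U(T₁,…,T_g)` decomposes as
`W(G) = Σᵢ W(Tᵢ) + Σ_{i<j} [n_j·d_{T_i}(u_i) + n_i·d_{T_j}(u_j) + n_i·n_j·d_{C_g}(u_i,u_j)]`. -/
theorem wiener_cycleTrees {g : ℕ} [NeZero g] (hg : 3 ≤ g) {V : Fin g → Type*}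
    [∀ i, Fintype (V i)] (T : ∀ i, SimpleGraph (V i)) (r : ∀ i, V i)
    (hT : ∀ i, (T i).IsTree) :
    wienerIndex (cycleTrees T r) =
      (∑ i : Fin g, wienerIndex (T i)) +
        ∑ i : Fin g, ∑ j ∈ Finset.univ.filter (fun j => i < j),
          (Fintype.card (V j) * vertexDist (T i) (r i) +
           Fintype.card (V i) * vertexDist (T j) (r j) +
           Fintype.card (V i) * Fintype.card (V j) * (SimpleGraph.cycleGraph g).dist i j) := by
  classical
  open CycleTreesAux in
  -- the double sum of distances, grouped by branches
  have hsigma : ∀ F : (Σ i, V i) → ℕ, ∑ a : Σ i, V i, F a = ∑ i : Fin g, ∑ x : V i, F ⟨i, x⟩ := by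
    intro F
    rw [← Finset.univ_sigma_univ, Finset.sum_sigma]
  set A : Fin g → Fin g → ℕ :=
    fun i j => ∑ x : V i, ∑ y : V j, (cycleTrees T r).dist ⟨i, x⟩ ⟨j, y⟩ with hA
  have hAsymm : ∀ i j, A i j = A j i := by
    intro i j
    rw [hA]
    dsimp only
    rw [Finset.sum_comm]
    exact Finset.sum_congr rfl fun y _ => Finset.sum_congr rfl fun x _ =>
      SimpleGraph.dist_comm
  have hS : ∑ a : Σ i, V i, ∑ b : Σ i, V i, (cycleTrees T r).dist a b =
      ∑ i : Fin g, ∑ j : Fin g, A i j := by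
    rw [hsigma (fun a => ∑ b, (cycleTrees T r).dist a b)]
    refine Finset.sum_congr rfl fun i _ => ?_
    calc ∑ x : V i, ∑ b : Σ i, V i, (cycleTrees T r).dist ⟨i, x⟩ b
        = ∑ x : V i, ∑ j : Fin g, ∑ y : V j, (cycleTrees T r).dist ⟨i, x⟩ ⟨j, y⟩ :=
          Finset.sum_congr rfl fun x _ =>
            hsigma (fun b => (cycleTrees T r).dist ⟨i, x⟩ b)
      _ = ∑ j : Fin g, ∑ x : V i, ∑ y : V j, (cycleTrees T r).dist ⟨i, x⟩ ⟨j, y⟩ :=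
          Finset.sum_comm
      _ = ∑ j : Fin g, A i j := rfl
  have hdiag : ∀ i, A i i = 2 * wienerIndex (T i) := by
    intro i
    rw [hA]
    dsimp only
    calc ∑ x : V i, ∑ y : V i, (cycleTrees T r).dist ⟨i, x⟩ ⟨i, y⟩
        = ∑ x : V i, ∑ y : V i, (T i).dist x y :=
          Finset.sum_congr rfl fun x _ => Finset.sum_congr rfl fun y _ =>
            dist_mk_same T r hT hg i x y
      _ = 2 * wienerIndex (T i) := sum_dist_eq_two_mul_wiener (T i)
  have hoff : ∀ i j : Fin g, i < j → A i j =
      Fintype.card (V j) * vertexDist (T i) (r i) +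
        Fintype.card (V i) * vertexDist (T j) (r j) +
        Fintype.card (V i) * Fintype.card (V j) * (SimpleGraph.cycleGraph g).dist i j := by
    intro i j hij
    rw [hA]
    dsimp only
    have hform : ∀ (x : V i) (y : V j), (cycleTrees T r).dist ⟨i, x⟩ ⟨j, y⟩ =
        (T i).dist (r i) x + (T j).dist (r j) y + (cycleGraph g).dist i j := by
      intro x y
      rw [dist_mk_ne T r hT hg hij.ne x y, SimpleGraph.dist_comm (u := x)]
    calc ∑ x : V i, ∑ y : V j, (cycleTrees T r).dist ⟨i, x⟩ ⟨j, y⟩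
        = ∑ x : V i, ∑ y : V j,
            ((T i).dist (r i) x + (T j).dist (r j) y + (cycleGraph g).dist i j) :=
          Finset.sum_congr rfl fun x _ => Finset.sum_congr rfl fun y _ => hform x y
      _ = _ := by
          simp only [Finset.sum_add_distrib, Finset.sum_const, Finset.card_univ,
            smul_eq_mul, ← Finset.mul_sum, vertexDist]
          ring
  have key : ∑ a : Σ i, V i, ∑ b : Σ i, V i, (cycleTrees T r).dist a b =
      2 * ((∑ i : Fin g, wienerIndex (T i)) +
        ∑ i : Fin g, ∑ j ∈ Finset.univ.filter (fun j => i < j),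
          (Fintype.card (V j) * vertexDist (T i) (r i) +
           Fintype.card (V i) * vertexDist (T j) (r j) +
           Fintype.card (V i) * Fintype.card (V j) * (SimpleGraph.cycleGraph g).dist i j)) := by
    rw [hS, double_sum_symm A hAsymm]
    have e1 : ∑ i, A i i = 2 * ∑ i : Fin g, wienerIndex (T i) := by
      rw [Finset.mul_sum]
      exact Finset.sum_congr rfl fun i _ => hdiag i
    have e2 : ∑ i : Fin g, ∑ j ∈ Finset.univ.filter (fun j => i < j), A i j =
        ∑ i : Fin g, ∑ j ∈ Finset.univ.filter (fun j => i < j),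
          (Fintype.card (V j) * vertexDist (T i) (r i) +
           Fintype.card (V i) * vertexDist (T j) (r j) +
           Fintype.card (V i) * Fintype.card (V j) * (SimpleGraph.cycleGraph g).dist i j) := by
      refine Finset.sum_congr rfl fun i _ => Finset.sum_congr rfl fun j hj => ?_
      simp only [Finset.mem_filter, Finset.mem_univ, true_and] at hj
      exact hoff i j hj
    rw [e1, e2]
    ring
  calc wienerIndex (cycleTrees T r)
      = (∑ a : Σ i, V i, ∑ b : Σ i, V i, (cycleTrees T r).dist a b) / 2 := rfl
    _ = _ := by rw [key, Nat.mul_div_cancel_left _ (by norm_num : 0 < 2)]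
end

section
/- Let G = U(T₁,…,T_g) and G₁ = U(T̃₁,T₂,…,T_g) be unicyclic graphs of order n with girth g obtained by attaching trees T_i at the vertices u_i of a common cycle C_g, differing only in the first branch. If |V(T₁)| = |V(T̃₁)|, W(T₁) ≥ W(T̃₁), and d_{T₁}(u₁) ≥ d_{T̃₁}(u₁), then W(G) ≥ W(G₁), with equality if and only if W(T₁) = W(T̃₁) and d_{T₁}(u₁) = d_{T̃₁}(u₁). -/
open SimpleGraph Finset

/-! Every vertex `u` of `G = U(T₁,…,T_g)` has a shadow `proj u` in the first branch (`u` itself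
if it lies there, the root `u₁` otherwise) and an image `collapse u` in the graph where the first
branch is contracted to `u₁`. Every edge of `G` moves exactly one of the two coordinates, and a
path leaving the first branch passes through `u₁`, so
`d_G(u, v) = d_{T₁}(proj u, proj v) + d_G(collapse u, collapse v)`,
where the last term does not depend on `T₁`. Summing over all pairs,
`W(G) = W(T₁) + (n - |T₁|) d_{T₁}(u₁) + C` with `C` independent of `T₁`, and `n - |T₁| > 0`. -/

namespace SimpleGraph

variable {α β γ : Type*} {G : SimpleGraph α} {u v : α}

theorem Reachable.dist_map_le {G' : SimpleGraph β} (f : G →g G') (h : G.Reachable u v) :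
    G'.dist (f u) (f v) ≤ G.dist u v := by
  obtain ⟨p, hp⟩ := h.exists_walk_length_eq_dist
  exact hp ▸ (p.length_map f) ▸ dist_le (p.map f)

theorem Walk.dist_add_dist_le_length {H₁ : SimpleGraph β} {H₂ : SimpleGraph γ}
    (f₁ : α → β) (f₂ : α → γ)
    (hf : ∀ ⦃a b⦄, G.Adj a b →
      H₁.Adj (f₁ a) (f₁ b) ∧ f₂ a = f₂ b ∨ f₁ a = f₁ b ∧ H₂.Adj (f₂ a) (f₂ b))
    (p : G.Walk u v) :
    H₁.dist (f₁ u) (f₁ v) + H₂.dist (f₂ u) (f₂ v) ≤ p.length := by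
  induction p with
  | nil => simp
  | @cons a b c hadj p ih =>
    rw [Walk.length_cons]
    rcases hf hadj with ⟨h₁, h₂⟩ | ⟨h₁, h₂⟩
    · have := h₁.reachable.dist_triangle_left (f₁ c)
      rw [dist_eq_one_iff_adj.mpr h₁] at this
      rw [h₂]
      omega
    · have := h₂.reachable.dist_triangle_left (f₂ c)
      rw [dist_eq_one_iff_adj.mpr h₂] at this
      rw [h₁]
      omega

theorem Reachable.dist_add_dist_le {H₁ : SimpleGraph β} {H₂ : SimpleGraph γ}
    (f₁ : α → β) (f₂ : α → γ)
    (hf : ∀ ⦃a b⦄, G.Adj a b →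
      H₁.Adj (f₁ a) (f₁ b) ∧ f₂ a = f₂ b ∨ f₁ a = f₁ b ∧ H₂.Adj (f₂ a) (f₂ b))
    (h : G.Reachable u v) :
    H₁.dist (f₁ u) (f₁ v) + H₂.dist (f₂ u) (f₂ v) ≤ G.dist u v := by
  obtain ⟨p, hp⟩ := h.exists_walk_length_eq_dist
  exact hp ▸ p.dist_add_dist_le_length f₁ f₂ hf

theorem even_sum_sum_dist [Fintype α] (G : SimpleGraph α) :
    Even (∑ u, ∑ v, G.dist u v) := by
  rw [even_iff_two_dvd, ← ZMod.natCast_eq_zero_iff]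
  push_cast
  rw [← Finset.sum_product']
  refine Finset.sum_ninvolution Prod.swap (fun p => ?_) (fun p hp hswap => hp ?_)
    (fun _ => mem_univ _) Prod.swap_swap
  · rw [Prod.fst_swap, Prod.snd_swap, dist_comm]
    exact CharTwo.add_self_eq_zero _
  · rw [← Prod.fst_swap (p := p), hswap, dist_self, Nat.cast_zero]

end SimpleGraph

theorem two_mul_wienerIndex {α : Type*} [Fintype α] (G : SimpleGraph α) :
    2 * wienerIndex G = ∑ u, ∑ v, G.dist u v :=
  Nat.two_mul_div_two_of_even G.even_sum_sum_dist

namespace cycleTrees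

variable {g : ℕ} [NeZero g] {V : Fin g → Type*}

def proj (r : ∀ i, V i) (u : Σ i, V i) : V 0 :=
  if h : u.1 = 0 then h ▸ u.2 else r 0

def collapse (r : ∀ i, V i) (u : Σ i, V i) : Σ i, V i :=
  if u.1 = 0 then ⟨0, r 0⟩ else u

variable (r : ∀ i, V i)

@[simp] lemma proj_zero (x : V 0) : proj r ⟨0, x⟩ = x := dif_pos rfl

@[simp] lemma proj_of_ne {i : Fin g} (hi : i ≠ 0) (x : V i) : proj r ⟨i, x⟩ = r 0 := dif_neg hi

@[simp] lemma collapse_zero (x : V 0) : collapse r ⟨0, x⟩ = ⟨0, r 0⟩ := if_pos rfl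

@[simp] lemma collapse_of_ne {i : Fin g} (hi : i ≠ 0) (x : V i) : collapse r ⟨i, x⟩ = ⟨i, x⟩ :=
  if_neg hi

@[simp] lemma proj_root (i : Fin g) : proj r ⟨i, r i⟩ = r 0 := by
  by_cases hi : i = 0
  · subst hi; exact proj_zero r _
  · exact proj_of_ne r hi _

@[simp] lemma collapse_root (i : Fin g) : collapse r ⟨i, r i⟩ = ⟨i, r i⟩ := by
  by_cases hi : i = 0
  · subst hi; exact collapse_zero r _
  · exact collapse_of_ne r hi _

@[simp] lemma proj_collapse (u : Σ i, V i) : proj r (collapse r u) = r 0 := by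
  obtain ⟨i, x⟩ := u
  by_cases hi : i = 0
  · subst hi; simp
  · simp [hi]

@[simp] lemma collapse_collapse (u : Σ i, V i) : collapse r (collapse r u) = collapse r u := by
  obtain ⟨i, x⟩ := u
  by_cases hi : i = 0
  · subst hi; simp
  · simp [hi]

def branchHom (S : ∀ i, SimpleGraph (V i)) (i : Fin g) : S i →g cycleTrees S r where
  toFun x := ⟨i, x⟩
  map_rel' h := (fromRel_adj _ _ _).mpr
    ⟨fun e => h.ne (sigma_mk_injective e), Or.inl (Or.inl ⟨i, _, _, rfl, rfl, h⟩)⟩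

@[simp] lemma branchHom_apply (S : ∀ i, SimpleGraph (V i)) (i : Fin g) (x : V i) :
    branchHom r S i x = ⟨i, x⟩ := rfl

variable {r}

lemma reachable_root_add_one (S : ∀ i, SimpleGraph (V i)) (i : Fin g) :
    (cycleTrees S r).Reachable ⟨i, r i⟩ ⟨i + 1, r (i + 1)⟩ := by
  by_cases he : (⟨i, r i⟩ : Σ i, V i) = ⟨i + 1, r (i + 1)⟩
  · rw [he]
  · exact Adj.reachable ((fromRel_adj _ _ _).mpr ⟨he, Or.inl (Or.inr ⟨i, rfl, rfl⟩)⟩)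

variable {S S' : ∀ i, SimpleGraph (V i)}

variable (r) in
open Fin.NatCast in
lemma connected (hS : ∀ i, (S i).Preconnected) :
    (cycleTrees S r).Connected := by
  have hroot (k : ℕ) : (cycleTrees S r).Reachable ⟨0, r 0⟩ ⟨(k : Fin g), r k⟩ := by
    induction k with
    | zero => rw [Nat.cast_zero]
    | succ k ih => exact Nat.cast_succ (R := Fin g) k ▸ ih.trans (reachable_root_add_one S _)
  have hall (u : Σ i, V i) : (cycleTrees S r).Reachable ⟨0, r 0⟩ u := by
    obtain ⟨i, x⟩ := u
    exact Fin.cast_val_eq_self i ▸ hroot i |>.trans ((hS i (r i) x).map (branchHom r S i))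
  exact (connected_iff _).mpr ⟨fun u v => (hall u).symm.trans (hall v), ⟨⟨0, r 0⟩⟩⟩

lemma adj_split (hSS' : ∀ i ≠ 0, S i = S' i) {a b : Σ i, V i} (h : (cycleTrees S r).Adj a b) :
    (S 0).Adj (proj r a) (proj r b) ∧ collapse r a = collapse r b ∨
      proj r a = proj r b ∧ (cycleTrees S' r).Adj (collapse r a) (collapse r b) := by
  have key : ∀ a b : Σ i, V i, a ≠ b →
      (∃ (i : Fin g) (x y : V i), a = ⟨i, x⟩ ∧ b = ⟨i, y⟩ ∧ (S i).Adj x y) ∨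
        (∃ i : Fin g, a = ⟨i, r i⟩ ∧ b = ⟨i + 1, r (i + 1)⟩) →
      (S 0).Adj (proj r a) (proj r b) ∧ collapse r a = collapse r b ∨
        proj r a = proj r b ∧ (cycleTrees S' r).Adj (collapse r a) (collapse r b) := by
    rintro a b hne (⟨i, x, y, rfl, rfl, hxy⟩ | ⟨i, rfl, rfl⟩)
    · by_cases hi : i = 0
      · subst hi
        exact Or.inl ⟨by simpa using hxy, by simp⟩
      · refine Or.inr ⟨by simp [hi], ?_⟩
        rw [collapse_of_ne r hi, collapse_of_ne r hi]
        exact (branchHom r S' i).map_adj (hSS' i hi ▸ hxy)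
    · refine Or.inr ⟨by simp, ?_⟩
      rw [collapse_root, collapse_root]
      exact (fromRel_adj _ _ _).mpr ⟨hne, Or.inl (Or.inr ⟨i, rfl, rfl⟩)⟩
  obtain ⟨hne, hab | hba⟩ := (fromRel_adj _ _ _).mp h
  · exact key a b hne hab
  · rcases key b a hne.symm hba with ⟨h₁, h₂⟩ | ⟨h₁, h₂⟩
    · exact Or.inl ⟨h₁.symm, h₂.symm⟩
    · exact Or.inr ⟨h₁.symm, h₂.symm⟩

lemma dist_proj_add_dist_collapse_le (hSS' : ∀ i ≠ 0, S i = S' i)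
    (hS : ∀ i, (S i).Preconnected) (u v : Σ i, V i) :
    (S 0).dist (proj r u) (proj r v) + (cycleTrees S' r).dist (collapse r u) (collapse r v) ≤
      (cycleTrees S r).dist u v :=
  ((connected r hS).preconnected u v).dist_add_dist_le _ _ fun _ _ => adj_split hSS'

lemma dist_collapse_eq (hSS' : ∀ i ≠ 0, S i = S' i) (hS : ∀ i, (S i).Preconnected)
    (hS' : ∀ i, (S' i).Preconnected) (u v : Σ i, V i) :
    (cycleTrees S r).dist (collapse r u) (collapse r v) =
      (cycleTrees S' r).dist (collapse r u) (collapse r v) := by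
  have h := dist_proj_add_dist_collapse_le (r := r) hSS' hS (collapse r u) (collapse r v)
  have h' := dist_proj_add_dist_collapse_le (r := r) (fun i hi => (hSS' i hi).symm) hS'
    (collapse r u) (collapse r v)
  simp only [proj_collapse, collapse_collapse, dist_self, zero_add] at h h'
  exact le_antisymm h' h

lemma dist_le_of_fst_eq_zero (hS : ∀ i, (S i).Preconnected) {u : Σ i, V i} (hu : u.1 = 0)
    (v : Σ i, V i) :
    (cycleTrees S r).dist u v ≤
      (S 0).dist (proj r u) (proj r v) + (cycleTrees S r).dist (collapse r u) (collapse r v) := by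
  obtain ⟨i, a⟩ := u
  obtain ⟨j, b⟩ := v
  subst hu
  by_cases hj : j = 0
  · subst hj
    simpa using (hS 0 a b).dist_map_le (branchHom r S 0)
  · have hbranch := (hS 0 a (r 0)).dist_map_le (branchHom r S 0)
    have htri := ((connected r hS).preconnected ⟨0, a⟩ ⟨0, r 0⟩).dist_triangle_left ⟨j, b⟩
    simp only [proj_zero, proj_of_ne r hj, collapse_zero, collapse_of_ne r hj]
    exact htri.trans (Nat.add_le_add_right hbranch _)

lemma dist_eq_dist_proj_add_dist_collapse (hS : ∀ i, (S i).Preconnected) (u v : Σ i, V i) :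
    (cycleTrees S r).dist u v =
      (S 0).dist (proj r u) (proj r v) + (cycleTrees S r).dist (collapse r u) (collapse r v) := by
  refine le_antisymm ?_ (dist_proj_add_dist_collapse_le (fun _ _ => rfl) hS u v)
  by_cases hu : u.1 = 0
  · exact dist_le_of_fst_eq_zero hS hu v
  by_cases hv : v.1 = 0
  · simpa only [dist_comm] using dist_le_of_fst_eq_zero hS hv u
  obtain ⟨i, x⟩ := u
  obtain ⟨j, y⟩ := v
  simp [proj_of_ne r hu, proj_of_ne r hv, collapse_of_ne r hu, collapse_of_ne r hv]

variable [∀ i, Fintype (V i)]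

variable (V) in
def cardOffBranchZero : ℕ :=
  ∑ i ∈ ({0}ᶜ : Finset (Fin g)), Fintype.card (V i)

lemma cardOffBranchZero_pos [∀ i, Nonempty (V i)] (hg : 2 ≤ g) : 0 < cardOffBranchZero V :=
  sum_pos' (fun _ _ => Nat.zero_le _) ⟨⟨1, hg⟩, by simp [Fin.ext_iff], Fintype.card_pos⟩

variable (r) in
lemma sum_comp_proj {M : Type*} [AddCommMonoid M] (f : V 0 → M) :
    ∑ u, f (proj r u) = ∑ a, f a + cardOffBranchZero V • f (r 0) := by
  rw [← univ_sigma_univ, sum_sigma, Fintype.sum_eq_add_sum_compl 0, cardOffBranchZero, sum_smul]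
  congr 1
  refine sum_congr rfl fun i hi => ?_
  simp [proj_of_ne r (mem_compl.mp hi ∘ mem_singleton.mpr)]

variable (r) in
lemma sum_sum_dist_proj (H : SimpleGraph (V 0)) :
    ∑ u, ∑ v, H.dist (proj r u) (proj r v) =
      ∑ a, ∑ b, H.dist a b + 2 * cardOffBranchZero V * vertexDist H (r 0) := by
  set N := cardOffBranchZero V
  calc ∑ u, ∑ v, H.dist (proj r u) (proj r v)
      = ∑ u, (∑ b, H.dist (proj r u) b + N • H.dist (proj r u) (r 0)) :=
        sum_congr rfl fun u _ => sum_comp_proj r _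
    _ = ∑ a, (∑ b, H.dist a b + N • H.dist a (r 0)) + N • (∑ b, H.dist (r 0) b + N • 0) := by
        rw [sum_comp_proj r fun a => ∑ b, H.dist a b + N • H.dist a (r 0), dist_self]
    _ = ∑ a, ∑ b, H.dist a b + 2 * N * vertexDist H (r 0) := by
        simp only [sum_add_distrib, smul_eq_mul, ← mul_sum, dist_comm (v := r 0), vertexDist]
        ring

lemma two_mul_wienerIndex_cycleTrees (hS : ∀ i, (S i).Preconnected) :
    2 * wienerIndex (cycleTrees S r) =
      2 * wienerIndex (S 0) + 2 * cardOffBranchZero V * vertexDist (S 0) (r 0) +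
        ∑ u, ∑ v, (cycleTrees S r).dist (collapse r u) (collapse r v) := by
  rw [two_mul_wienerIndex, two_mul_wienerIndex, ← sum_sum_dist_proj r, ← sum_add_distrib]
  exact sum_congr rfl fun u _ => (sum_congr rfl fun v _ =>
    dist_eq_dist_proj_add_dist_collapse hS u v).trans sum_add_distrib

lemma wienerIndex_add_eq (hSS' : ∀ i ≠ 0, S i = S' i) (hS : ∀ i, (S i).Preconnected)
    (hS' : ∀ i, (S' i).Preconnected) :
    wienerIndex (cycleTrees S r) + wienerIndex (S' 0) +
        cardOffBranchZero V * vertexDist (S' 0) (r 0) =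
      wienerIndex (cycleTrees S' r) + wienerIndex (S 0) +
        cardOffBranchZero V * vertexDist (S 0) (r 0) := by
  have h := two_mul_wienerIndex_cycleTrees (r := r) hS
  have h' := two_mul_wienerIndex_cycleTrees (r := r) hS'
  simp only [dist_collapse_eq hSS' hS hS'] at h
  linarith

end cycleTrees

/-- Corollary 2.2: if the first branch `T 0` is replaced by a tree `T̃` on the same vertex
set with `W(T 0) ≥ W(T̃)` and `d_{T 0}(u₁) ≥ d_{T̃}(u₁)`, then `W(G) ≥ W(G₁)`, with
equality iff `W(T 0) = W(T̃)` and `d_{T 0}(u₁) = d_{T̃}(u₁)`. -/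
theorem wiener_cycleTrees_mono {g : ℕ} [NeZero g] (hg : 3 ≤ g) {V : Fin g → Type*}
    [∀ i, Fintype (V i)] (T : ∀ i, SimpleGraph (V i)) (Ttil : SimpleGraph (V 0))
    (r : ∀ i, V i) (hT : ∀ i, (T i).IsTree) (hTtil : Ttil.IsTree)
    (hW : wienerIndex Ttil ≤ wienerIndex (T 0))
    (hd : vertexDist Ttil (r 0) ≤ vertexDist (T 0) (r 0)) :
    wienerIndex (cycleTrees (Function.update T 0 Ttil) r) ≤ wienerIndex (cycleTrees T r) ∧
      (wienerIndex (cycleTrees (Function.update T 0 Ttil) r) = wienerIndex (cycleTrees T r) ↔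
        wienerIndex Ttil = wienerIndex (T 0) ∧
          vertexDist Ttil (r 0) = vertexDist (T 0) (r 0)) := by
  have hconn (i : Fin g) : (T i).Preconnected := (hT i).connected.preconnected
  have hconn' (i : Fin g) : (Function.update T 0 Ttil i).Preconnected := by
    rcases eq_or_ne i 0 with rfl | hi
    · simpa using hTtil.connected.preconnected
    · simpa [hi] using hconn i
  have key := cycleTrees.wienerIndex_add_eq (r := r)
    (fun i hi => (Function.update_of_ne hi Ttil T).symm) hconn hconn'
  rw [Function.update_self] at key
  have : ∀ i, Nonempty (V i) := fun i => ⟨r i⟩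
  have hN := cycleTrees.cardOffBranchZero_pos (V := V) (by omega : 2 ≤ g)
  have hmul := Nat.mul_le_mul_left (cycleTrees.cardOffBranchZero V) hd
  refine ⟨by omega, fun heq => ?_, fun ⟨hW', hd'⟩ => by rw [hd'] at key; omega⟩
  have hW' : wienerIndex Ttil = wienerIndex (T 0) := by omega
  exact ⟨hW', Nat.eq_of_mul_eq_mul_left hN (by omega)⟩
end

section
/- For even girth g ≥ 4 and integers n, β with n ≥ 2β ≥ 3g, the Wiener index of the extremal graph G*_{(n,g,β)} equals n² + (β − 3g/2 − 1 + ⌊g²/4⌋)n − (g/2)⌊g²/4⌋ + 3g/2 − 3β + 2. -/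
open SimpleGraph Finset

/-- For odd girth `g`, the extremal graph `G*_{(n,g,β)}` on `Fin n`: the cycle `C_g` on
vertices `0,…,g−1`, with the root of the tree `T*_{a,b}` (`a = β−(g+1)/2`,
`b = n−2β+1`) identified with the cycle vertex `0`; the star leaves are
`g,…,g+a+b−1` and each of the first `a` of them carries a pendant vertex
(`u + a + b` is attached to `u` for `g ≤ u < g+a`). -/
def GstarOdd (n g β : ℕ) : SimpleGraph (Fin n) :=
  SimpleGraph.fromRel fun u v =>
    (u.val + 1 = v.val ∧ v.val < g) ∨
    (u.val = 0 ∧ v.val = g - 1) ∨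
    (u.val = 0 ∧ g ≤ v.val ∧ v.val < g + (β - (g+1)/2) + (n - 2*β + 1)) ∨
    (g ≤ u.val ∧ u.val < g + (β - (g+1)/2) ∧ v.val = u.val + (β - (g+1)/2) + (n - 2*β + 1))

/-- For even girth `g`, the extremal graph `G*_{(n,g,β)}` on `Fin n`: the cycle `C_g` on
`0,…,g−1`, with the root of the tree `T*_{a,b}` (`a = β−g/2−1`, `b = n−2β+1`) identified
with the cycle vertex `0` (star leaves `g,…,g+a+b−1`, pendant vertices `u+a+b` attached to
`u` for `g ≤ u < g+a`), and one extra pendant vertex `n−1` attached to the cycle vertex `1`. -/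
def GstarEven (n g β : ℕ) : SimpleGraph (Fin n) :=
  SimpleGraph.fromRel fun u v =>
    (u.val + 1 = v.val ∧ v.val < g) ∨
    (u.val = 0 ∧ v.val = g - 1) ∨
    (u.val = 0 ∧ g ≤ v.val ∧ v.val < g + (β - g/2 - 1) + (n - 2*β + 1)) ∨
    (g ≤ u.val ∧ u.val < g + (β - g/2 - 1) ∧ v.val = u.val + (β - g/2 - 1) + (n - 2*β + 1)) ∨
    (u.val = 1 ∧ v.val = n - 1)



namespace WAux

def mm (g k : ℕ) : ℕ := min k (g - k)
def dc (g i j : ℕ) : ℕ := mm g ((i - j) + (j - i))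
def AA (g n u : ℕ) : ℕ := if u < g then u else if u = n - 1 then 1 else 0
def DD (g a b n u : ℕ) : ℕ :=
  if u < g then 0 else if u < g + a + b then 1 else if u = n - 1 then 1 else 2

def dfun (g a b n u v : ℕ) : ℕ :=
  if u = v then 0
  else if (g ≤ u ∧ u < g + a ∧ v = u + a + b) ∨ (g ≤ v ∧ v < g + a ∧ u = v + a + b) then 1
  else dc g (AA g n u) (AA g n v) + DD g a b n u + DD g a b n v

def rel (g a b n u v : ℕ) : Prop :=
  (u + 1 = v ∧ v < g) ∨ (u = 0 ∧ v = g - 1) ∨ (u = 0 ∧ g ≤ v ∧ v < g + a + b) ∨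
    (g ≤ u ∧ u < g + a ∧ v = u + a + b) ∨ (u = 1 ∧ v = n - 1)

lemma dfun_self (g a b n u : ℕ) : dfun g a b n u u = 0 := by unfold dfun; simp

section eval
set_option linter.unusedSectionVars false
variable {g a b n h u v : ℕ} (hh : g = 2*h) (hg : 2 ≤ h) (ha : 1 ≤ a) (hb : 1 ≤ b)
    (hn : n = g + 2*a + b + 1)

include hh hg ha hb hn

lemma ev_cc (hu : u < g) (hv : v < g) : dfun g a b n u v = dc g u v := by
  unfold dfun dc AA DD mm; split_ifs <;> omega

lemma ev_cl (hu : u < g) (hv : g ≤ v) (hv2 : v < g + a + b) :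
    dfun g a b n u v = mm g u + 1 := by
  unfold dfun dc AA DD mm; split_ifs <;> omega

lemma ev_lc (hu : g ≤ u) (hu2 : u < g + a + b) (hv : v < g) :
    dfun g a b n u v = mm g v + 1 := by
  unfold dfun dc AA DD mm; split_ifs <;> omega

lemma ev_cp (hu : u < g) (hv : g + a + b ≤ v) (hv2 : v < n - 1) :
    dfun g a b n u v = mm g u + 2 := by
  unfold dfun dc AA DD mm; split_ifs <;> omega

lemma ev_pc (hu : g + a + b ≤ u) (hu2 : u < n - 1) (hv : v < g) :
    dfun g a b n u v = mm g v + 2 := by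
  unfold dfun dc AA DD mm; split_ifs <;> omega

lemma ev_cq (hu : u < g) (hv : v = n - 1) : dfun g a b n u v = dc g u 1 + 1 := by
  unfold dfun dc AA DD mm; split_ifs <;> omega

lemma ev_qc (hu : u = n - 1) (hv : v < g) : dfun g a b n u v = dc g 1 v + 1 := by
  unfold dfun dc AA DD mm; split_ifs <;> omega

lemma ev_ll (hu : g ≤ u) (hu2 : u < g + a + b) (hv : g ≤ v) (hv2 : v < g + a + b) :
    dfun g a b n u v = if u = v then 0 else 2 := by
  unfold dfun dc AA DD mm; split_ifs <;> omega

lemma ev_lp (hu : g ≤ u) (hu2 : u < g + a + b) (hv : g + a + b ≤ v) (hv2 : v < n - 1) :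
    dfun g a b n u v = if v = u + a + b then 1 else 3 := by
  unfold dfun dc AA DD mm; split_ifs <;> omega

lemma ev_pl (hu : g + a + b ≤ u) (hu2 : u < n - 1) (hv : g ≤ v) (hv2 : v < g + a + b) :
    dfun g a b n u v = if u = v + a + b then 1 else 3 := by
  unfold dfun dc AA DD mm; split_ifs <;> omega

lemma ev_lq (hu : g ≤ u) (hu2 : u < g + a + b) (hv : v = n - 1) :
    dfun g a b n u v = 3 := by
  unfold dfun dc AA DD mm; split_ifs <;> omega

lemma ev_ql (hu : u = n - 1) (hv : g ≤ v) (hv2 : v < g + a + b) :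
    dfun g a b n u v = 3 := by
  unfold dfun dc AA DD mm; split_ifs <;> omega

lemma ev_pp (hu : g + a + b ≤ u) (hu2 : u < n - 1) (hv : g + a + b ≤ v) (hv2 : v < n - 1) :
    dfun g a b n u v = if u = v then 0 else 4 := by
  unfold dfun dc AA DD mm; split_ifs <;> omega

lemma ev_pq (hu : g + a + b ≤ u) (hu2 : u < n - 1) (hv : v = n - 1) :
    dfun g a b n u v = 4 := by
  unfold dfun dc AA DD mm; split_ifs <;> omega

lemma ev_qp (hu : u = n - 1) (hv : g + a + b ≤ v) (hv2 : v < n - 1) :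
    dfun g a b n u v = 4 := by
  unfold dfun dc AA DD mm; split_ifs <;> omega

lemma ev_qq (hu : u = n - 1) (hv : v = n - 1) : dfun g a b n u v = 0 := by
  unfold dfun dc AA DD mm; split_ifs <;> omega

lemma key (u v w : ℕ) (hu : u < n) (hv : v < n) (hw : w < n)
    (hr : rel g a b n u w) :
    dfun g a b n u v ≤ dfun g a b n w v + 1 ∧ dfun g a b n w v ≤ dfun g a b n u v + 1 := by
  have hvclass : v < g ∨ (g ≤ v ∧ v < g + a + b) ∨ (g + a + b ≤ v ∧ v < n - 1) ∨ v = n - 1 := by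
    omega
  rcases hr with h1 | h1 | h1 | h1 | h1
  · -- cycle edge (u, u+1=w)
    rcases hvclass with hc | hc | hc | hc
    · rw [ev_cc hh hg ha hb hn (by omega) hc, ev_cc hh hg ha hb hn (by omega) hc]
      unfold dc mm; omega
    · rw [ev_cl hh hg ha hb hn (by omega) hc.1 hc.2, ev_cl hh hg ha hb hn (by omega) hc.1 hc.2]
      unfold mm; omega
    · rw [ev_cp hh hg ha hb hn (by omega) hc.1 hc.2, ev_cp hh hg ha hb hn (by omega) hc.1 hc.2]
      unfold mm; omega
    · rw [ev_cq hh hg ha hb hn (by omega) hc, ev_cq hh hg ha hb hn (by omega) hc]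
      unfold dc mm; omega
  · -- edge (0, g-1)
    rcases hvclass with hc | hc | hc | hc
    · rw [ev_cc hh hg ha hb hn (by omega) hc, ev_cc hh hg ha hb hn (by omega) hc]
      unfold dc mm; omega
    · rw [ev_cl hh hg ha hb hn (by omega) hc.1 hc.2, ev_cl hh hg ha hb hn (by omega) hc.1 hc.2]
      unfold mm; omega
    · rw [ev_cp hh hg ha hb hn (by omega) hc.1 hc.2, ev_cp hh hg ha hb hn (by omega) hc.1 hc.2]
      unfold mm; omega
    · rw [ev_cq hh hg ha hb hn (by omega) hc, ev_cq hh hg ha hb hn (by omega) hc]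
      unfold dc mm; omega
  · -- edge (0, leaf w)
    rcases hvclass with hc | hc | hc | hc
    · rw [ev_cc hh hg ha hb hn (by omega) hc, ev_lc hh hg ha hb hn h1.2.1 h1.2.2 hc]
      unfold dc mm; omega
    · rw [ev_cl hh hg ha hb hn (by omega) hc.1 hc.2, ev_ll hh hg ha hb hn h1.2.1 h1.2.2 hc.1 hc.2]
      split_ifs <;> unfold mm <;> omega
    · rw [ev_cp hh hg ha hb hn (by omega) hc.1 hc.2, ev_lp hh hg ha hb hn h1.2.1 h1.2.2 hc.1 hc.2]
      split_ifs <;> unfold mm <;> omega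
    · rw [ev_cq hh hg ha hb hn (by omega) hc, ev_lq hh hg ha hb hn h1.2.1 h1.2.2 hc]
      unfold dc mm; omega
  · -- edge (leaf u, pendant w = u+a+b)
    rcases hvclass with hc | hc | hc | hc
    · rw [ev_lc hh hg ha hb hn h1.1 (by omega) hc, ev_pc hh hg ha hb hn (by omega) (by omega) hc]
      omega
    · rw [ev_ll hh hg ha hb hn h1.1 (by omega) hc.1 hc.2,
        ev_pl hh hg ha hb hn (by omega) (by omega) hc.1 hc.2]
      split_ifs <;> omega
    · rw [ev_lp hh hg ha hb hn h1.1 (by omega) hc.1 hc.2,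
        ev_pp hh hg ha hb hn (by omega) (by omega) hc.1 hc.2]
      split_ifs <;> omega
    · rw [ev_lq hh hg ha hb hn h1.1 (by omega) hc, ev_pq hh hg ha hb hn (by omega) (by omega) hc]
      omega
  · -- edge (1, n-1)
    rcases hvclass with hc | hc | hc | hc
    · rw [ev_cc hh hg ha hb hn (by omega) hc, ev_qc hh hg ha hb hn h1.2 hc]
      obtain ⟨rfl, -⟩ := h1; unfold dc mm; omega
    · rw [ev_cl hh hg ha hb hn (by omega) hc.1 hc.2, ev_ql hh hg ha hb hn h1.2 hc.1 hc.2]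
      unfold mm; omega
    · rw [ev_cp hh hg ha hb hn (by omega) hc.1 hc.2, ev_qp hh hg ha hb hn h1.2 hc.1 hc.2]
      unfold mm; omega
    · rw [ev_cq hh hg ha hb hn (by omega) hc, ev_qq hh hg ha hb hn h1.2 hc]
      unfold dc mm; omega

end eval
end WAux

section graphpart
namespace WAux

def GG (g a b n : ℕ) : SimpleGraph (Fin n) :=
  SimpleGraph.fromRel fun u v => rel g a b n u.val v.val

lemma GG_adj {g a b n : ℕ} (u v : Fin n) :
    (GG g a b n).Adj u v ↔ u ≠ v ∧ (rel g a b n u.val v.val ∨ rel g a b n v.val u.val) := by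
  unfold GG; exact SimpleGraph.fromRel_adj _ u v

section withhyp
set_option linter.unusedSectionVars false
variable {g a b n h : ℕ} (hh : g = 2*h) (hg : 2 ≤ h) (ha : 1 ≤ a) (hb : 1 ≤ b)
    (hn : n = g + 2*a + b + 1)
include hh hg ha hb hn

lemma adj_of_rel' (x y : ℕ) (hx : x < n) (hy : y < n) (hne : x ≠ y)
    (hr : rel g a b n x y) : (GG g a b n).Adj ⟨x, hx⟩ ⟨y, hy⟩ :=
  (GG_adj _ _).mpr ⟨fun hc => hne (congrArg Fin.val hc), Or.inl hr⟩

lemma dist_le_one {u v : Fin n} (hadj : (GG g a b n).Adj u v) :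
    (GG g a b n).dist u v ≤ 1 := by
  have := SimpleGraph.dist_le (SimpleGraph.Walk.cons hadj SimpleGraph.Walk.nil)
  simpa using this

lemma reach_zero (u : Fin n) : (GG g a b n).Reachable u ⟨0, by omega⟩ := by
  obtain ⟨k, hk⟩ : ∃ k, u.val = k := ⟨u.val, rfl⟩
  induction k using Nat.strong_induction_on generalizing u with
  | _ k ih =>
    rcases Nat.eq_zero_or_pos k with h0 | h0
    · have : u = ⟨0, by omega⟩ := Fin.ext (show u.val = 0 by omega)
      rw [this]
    · have hu2 := u.2
      by_cases hcyc : u.val < g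
      · have hadj : (GG g a b n).Adj ⟨u.val - 1, by omega⟩ ⟨u.val, u.2⟩ :=
          adj_of_rel' hh hg ha hb hn _ _ (by omega) u.2 (by omega)
            (Or.inl ⟨by omega, hcyc⟩)
        exact (SimpleGraph.Adj.reachable hadj).symm.trans (ih (u.val - 1) (by omega) _ rfl)
      · by_cases hleaf : u.val < g + a + b
        · have hadj : (GG g a b n).Adj ⟨0, by omega⟩ ⟨u.val, u.2⟩ :=
            adj_of_rel' hh hg ha hb hn _ _ (by omega) u.2 (by omega)
              (Or.inr (Or.inr (Or.inl ⟨rfl, by omega, hleaf⟩)))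
          exact (SimpleGraph.Adj.reachable hadj).symm
        · by_cases hpend : u.val < n - 1
          · have hadj : (GG g a b n).Adj ⟨u.val - (a+b), by omega⟩ ⟨u.val, u.2⟩ :=
              adj_of_rel' hh hg ha hb hn _ _ (by omega) u.2 (by omega)
                (Or.inr (Or.inr (Or.inr (Or.inl ⟨by omega, by omega, by omega⟩))))
            exact (SimpleGraph.Adj.reachable hadj).symm.trans
              (ih (u.val - (a+b)) (by omega) _ rfl)
          · have hadj : (GG g a b n).Adj ⟨1, by omega⟩ ⟨u.val, u.2⟩ :=
              adj_of_rel' hh hg ha hb hn _ _ (by omega) u.2 (by omega)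
                (Or.inr (Or.inr (Or.inr (Or.inr ⟨rfl, by omega⟩))))
            exact (SimpleGraph.Adj.reachable hadj).symm.trans (ih 1 (by omega) _ rfl)

lemma conn : (GG g a b n).Connected := by
  rw [SimpleGraph.connected_iff]
  exact ⟨fun u v => (reach_zero hh hg ha hb hn u).trans
    (reach_zero hh hg ha hb hn v).symm, ⟨⟨0, by omega⟩⟩⟩

lemma dist_up : ∀ (k i j : ℕ) (_ : j < g) (_ : j = i + k) (hi2 : i < n) (hj2 : j < n),
    (GG g a b n).dist ⟨i, hi2⟩ ⟨j, hj2⟩ ≤ k := by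
  intro k
  induction k with
  | zero =>
    intro i j hj hij hi2 hj2
    have : (⟨i, hi2⟩ : Fin n) = ⟨j, hj2⟩ := Fin.ext (show i = j by omega)
    rw [this, SimpleGraph.dist_self]
  | succ k ih =>
    intro i j hj hij hi2 hj2
    have hm : i + k < n := by omega
    have tri := (conn hh hg ha hb hn).dist_triangle (u := (⟨i, hi2⟩ : Fin n))
      (v := ⟨i + k, hm⟩) (w := ⟨j, hj2⟩)
    have h1 := ih i (i+k) (by omega) rfl hi2 hm
    have h2 : (GG g a b n).dist ⟨i+k, hm⟩ ⟨j, hj2⟩ ≤ 1 :=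
      dist_le_one hh hg ha hb hn (adj_of_rel' hh hg ha hb hn _ _ hm hj2 (by omega)
        (Or.inl ⟨by omega, hj⟩))
    omega

lemma dist_cyc_le (i j : ℕ) (hle : i ≤ j) (hj : j < g) (hi2 : i < n) (hj2 : j < n) :
    (GG g a b n).dist ⟨i, hi2⟩ ⟨j, hj2⟩ ≤ dc g i j := by
  rcases le_or_gt (j - i) (g - (j - i)) with hcase | hcase
  · have := dist_up hh hg ha hb hn (j - i) i j hj (by omega) hi2 hj2
    unfold dc mm; omega
  · have h0 : (0:ℕ) < n := by omega
    have hg1 : g - 1 < n := by omega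
    have t1 : (GG g a b n).dist ⟨i, hi2⟩ ⟨0, h0⟩ ≤ i := by
      rw [SimpleGraph.dist_comm]
      exact dist_up hh hg ha hb hn i 0 i (by omega) (by omega) h0 hi2
    have t2 : (GG g a b n).dist ⟨0, h0⟩ ⟨g-1, hg1⟩ ≤ 1 :=
      dist_le_one hh hg ha hb hn (adj_of_rel' hh hg ha hb hn _ _ h0 hg1 (by omega)
        (Or.inr (Or.inl ⟨rfl, rfl⟩)))
    have t3 : (GG g a b n).dist ⟨g-1, hg1⟩ ⟨j, hj2⟩ ≤ g-1-j := by
      rw [SimpleGraph.dist_comm]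
      exact dist_up hh hg ha hb hn (g-1-j) j (g-1) (by omega) (by omega) hj2 hg1
    have tri1 := (conn hh hg ha hb hn).dist_triangle (u := (⟨i, hi2⟩ : Fin n))
      (v := ⟨0, h0⟩) (w := ⟨j, hj2⟩)
    have tri2 := (conn hh hg ha hb hn).dist_triangle (u := (⟨0, h0⟩ : Fin n))
      (v := ⟨g-1, hg1⟩) (w := ⟨j, hj2⟩)
    unfold dc mm; omega

lemma dist_cyc (i j : ℕ) (hi : i < g) (hj : j < g) (hi2 : i < n) (hj2 : j < n) :
    (GG g a b n).dist ⟨i, hi2⟩ ⟨j, hj2⟩ ≤ dc g i j := by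
  rcases le_total i j with hle | hle
  · exact dist_cyc_le hh hg ha hb hn i j hle hj hi2 hj2
  · have := dist_cyc_le hh hg ha hb hn j i hle hi hj2 hi2
    rw [SimpleGraph.dist_comm] at this
    have e : dc g i j = dc g j i := by unfold dc mm; omega
    omega

lemma AA_lt_g (w : ℕ) : AA g n w < g := by unfold AA; split_ifs <;> omega

lemma dist_anchor (w : Fin n) (hxn : AA g n w.val < n) :
    (GG g a b n).dist ⟨AA g n w.val, hxn⟩ w ≤ DD g a b n w.val := by
  have hw2 := w.2
  have hclass : w.val < g ∨ (g ≤ w.val ∧ w.val < g+a+b) ∨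
      (g+a+b ≤ w.val ∧ w.val < n-1) ∨ w.val = n-1 := by omega
  rcases hclass with hc | hc | hc | hc
  · have e : (⟨AA g n w.val, hxn⟩ : Fin n) = w :=
      Fin.ext (by show AA g n w.val = w.val; unfold AA; split_ifs <;> omega)
    rw [e, SimpleGraph.dist_self]; exact Nat.zero_le _
  · have h0n : (0:ℕ) < n := by omega
    have e : (⟨AA g n w.val, hxn⟩ : Fin n) = ⟨0, h0n⟩ :=
      Fin.ext (by show AA g n w.val = 0; unfold AA; split_ifs <;> omega)
    have hd : (GG g a b n).dist ⟨0, h0n⟩ ⟨w.val, w.2⟩ ≤ 1 :=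
      dist_le_one hh hg ha hb hn (adj_of_rel' hh hg ha hb hn _ _ h0n w.2 (by omega)
        (Or.inr (Or.inr (Or.inl ⟨rfl, hc.1, hc.2⟩))))
    have hD : 1 ≤ DD g a b n w.val := by unfold DD; split_ifs <;> omega
    have ew : (⟨w.val, w.2⟩ : Fin n) = w := Fin.ext rfl
    rw [ew] at hd
    rw [e]; omega
  · have h0n : (0:ℕ) < n := by omega
    have e : (⟨AA g n w.val, hxn⟩ : Fin n) = ⟨0, h0n⟩ :=
      Fin.ext (by show AA g n w.val = 0; unfold AA; split_ifs <;> omega)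
    have hm : w.val - (a+b) < n := by omega
    have t1 : (GG g a b n).dist ⟨0, h0n⟩ ⟨w.val - (a+b), hm⟩ ≤ 1 :=
      dist_le_one hh hg ha hb hn (adj_of_rel' hh hg ha hb hn _ _ h0n hm (by omega)
        (Or.inr (Or.inr (Or.inl ⟨rfl, by omega, by omega⟩))))
    have t2 : (GG g a b n).dist ⟨w.val - (a+b), hm⟩ ⟨w.val, w.2⟩ ≤ 1 :=
      dist_le_one hh hg ha hb hn (adj_of_rel' hh hg ha hb hn _ _ hm w.2 (by omega)
        (Or.inr (Or.inr (Or.inr (Or.inl ⟨by omega, by omega, by omega⟩)))))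
    have tri := (conn hh hg ha hb hn).dist_triangle (u := (⟨0, h0n⟩ : Fin n))
      (v := ⟨w.val - (a+b), hm⟩) (w := ⟨w.val, w.2⟩)
    have hD : DD g a b n w.val = 2 := by unfold DD; split_ifs <;> omega
    have ew : (⟨w.val, w.2⟩ : Fin n) = w := Fin.ext rfl
    rw [ew] at tri t2
    rw [e]; omega
  · have h1n : (1:ℕ) < n := by omega
    have e : (⟨AA g n w.val, hxn⟩ : Fin n) = ⟨1, h1n⟩ :=
      Fin.ext (by show AA g n w.val = 1; unfold AA; split_ifs <;> omega)
    have hd : (GG g a b n).dist ⟨1, h1n⟩ ⟨w.val, w.2⟩ ≤ 1 :=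
      dist_le_one hh hg ha hb hn (adj_of_rel' hh hg ha hb hn _ _ h1n w.2 (by omega)
        (Or.inr (Or.inr (Or.inr (Or.inr ⟨rfl, hc⟩)))))
    have hD : 1 ≤ DD g a b n w.val := by unfold DD; split_ifs <;> omega
    have ew : (⟨w.val, w.2⟩ : Fin n) = w := Fin.ext rfl
    rw [ew] at hd
    rw [e]; omega

lemma dist_le_dfun (u v : Fin n) :
    (GG g a b n).dist u v ≤ dfun g a b n u.val v.val := by
  have hu2 := u.2; have hv2 := v.2
  unfold dfun
  split_ifs with h1 h2
  · have : u = v := Fin.ext h1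
    rw [this, SimpleGraph.dist_self]
  · have eu : (⟨u.val, u.2⟩ : Fin n) = u := Fin.ext rfl
    have ev : (⟨v.val, v.2⟩ : Fin n) = v := Fin.ext rfl
    rcases h2 with hp | hp
    · have := dist_le_one hh hg ha hb hn
        (adj_of_rel' hh hg ha hb hn u.val v.val u.2 v.2 (by omega)
          (Or.inr (Or.inr (Or.inr (Or.inl hp)))))
      rw [eu, ev] at this; omega
    · have := dist_le_one hh hg ha hb hn
        (adj_of_rel' hh hg ha hb hn v.val u.val v.2 u.2 (by omega)
          (Or.inr (Or.inr (Or.inr (Or.inl hp)))))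
      rw [eu, ev, SimpleGraph.dist_comm] at this; omega
  · have hAu : AA g n u.val < n := by have := AA_lt_g hh hg ha hb hn u.val; omega
    have hAv : AA g n v.val < n := by have := AA_lt_g hh hg ha hb hn v.val; omega
    have b1 : (GG g a b n).dist u ⟨AA g n u.val, hAu⟩ ≤ DD g a b n u.val := by
      rw [SimpleGraph.dist_comm]; exact dist_anchor hh hg ha hb hn u hAu
    have b2 : (GG g a b n).dist ⟨AA g n u.val, hAu⟩ ⟨AA g n v.val, hAv⟩ ≤
        dc g (AA g n u.val) (AA g n v.val) :=
      dist_cyc hh hg ha hb hn _ _ (AA_lt_g hh hg ha hb hn _) (AA_lt_g hh hg ha hb hn _)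
        hAu hAv
    have b3 := dist_anchor hh hg ha hb hn v hAv
    have tri1 := (conn hh hg ha hb hn).dist_triangle (u := u)
      (v := (⟨AA g n u.val, hAu⟩ : Fin n)) (w := v)
    have tri2 := (conn hh hg ha hb hn).dist_triangle
      (u := (⟨AA g n u.val, hAu⟩ : Fin n)) (v := (⟨AA g n v.val, hAv⟩ : Fin n)) (w := v)
    omega

lemma dfun_le_len {u v : Fin n} (p : (GG g a b n).Walk u v) :
    dfun g a b n u.val v.val ≤ p.length := by
  induction p with
  | nil => rw [dfun_self]; exact Nat.zero_le _
  | @cons x y z hadj q ih =>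
    have hr := ((GG_adj x y).mp hadj).2
    rw [SimpleGraph.Walk.length_cons]
    rcases hr with hr | hr
    · have := (key hh hg ha hb hn x.val z.val y.val x.2 z.2 y.2 hr).1
      omega
    · have := (key hh hg ha hb hn y.val z.val x.val y.2 z.2 x.2 hr).2
      omega

lemma dist_eq (u v : Fin n) :
    (GG g a b n).dist u v = dfun g a b n u.val v.val := by
  refine le_antisymm (dist_le_dfun hh hg ha hb hn u v) ?_
  obtain ⟨p, hp⟩ := (conn hh hg ha hb hn).exists_walk_length_eq_dist u v
  rw [← hp]
  exact dfun_le_len hh hg ha hb hn p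

end withhyp
end WAux
end graphpart

namespace WAux

lemma gauss (m : ℕ) : 2 * (∑ k ∈ Finset.range m, k) = m * (m-1) := by
  rw [mul_comm]; exact Finset.sum_range_id_mul_two m

lemma sum_mm {h : ℕ} (hg : 2 ≤ h) :
    ∑ k ∈ Finset.range (2*h), mm (2*h) k = h * h := by
  obtain ⟨t, rfl⟩ : ∃ t, h = t + 2 := ⟨h - 2, by omega⟩
  rw [Finset.range_eq_Ico,
    ← Finset.sum_Ico_consecutive _ (show 0 ≤ t+3 by omega) (show t+3 ≤ 2*(t+2) by omega)]
  have e1 : ∑ k ∈ Finset.Ico 0 (t+3), mm (2*(t+2)) k = ∑ k ∈ Finset.range (t+3), k := by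
    rw [← Finset.range_eq_Ico]
    refine Finset.sum_congr rfl fun k hk => ?_
    rw [Finset.mem_range] at hk; unfold mm; omega
  have e2 : ∑ k ∈ Finset.Ico (t+3) (2*(t+2)), mm (2*(t+2)) k
      = ∑ k ∈ Finset.range (t+1), (k+1) := by
    rw [Finset.sum_Ico_eq_sum_range]
    rw [show 2*(t+2) - (t+3) = t+1 by omega]
    rw [← Finset.sum_range_reflect (fun j => j + 1) (t+1)]
    refine Finset.sum_congr rfl fun k hk => ?_
    rw [Finset.mem_range] at hk; unfold mm; omega
  rw [e1, e2]
  have e3 : ∑ k ∈ Finset.range (t+1), (k+1) = (∑ k ∈ Finset.range (t+1), k) + (t+1) := by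
    rw [Finset.sum_add_distrib, Finset.sum_const, Finset.card_range, smul_eq_mul, mul_one]
  rw [e3]
  have g1 := gauss (t+3)
  have g2 := gauss (t+1)
  have x1 : (t+3) * (t+3-1) = t*t + 5*t + 6 := by
    rw [show t+3-1 = t+2 by omega]; ring
  have x2 : (t+1) * (t+1-1) = t*t + t := by
    rw [show t+1-1 = t by omega]; ring
  have x3 : (t+2) * (t+2) = t*t + 4*t + 4 := by ring
  omega

lemma sum_dc {g h : ℕ} (hh : g = 2*h) (hg : 2 ≤ h) (i : ℕ) (hi : i < g) :
    ∑ j ∈ Finset.range g, dc g i j = h * h := by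
  have part1 : ∑ j ∈ Finset.range (i+1), dc g i j = ∑ j ∈ Finset.range (i+1), mm g j := by
    rw [show (∑ j ∈ Finset.range (i+1), dc g i j)
        = ∑ j ∈ Finset.range (i+1), mm g (i+1-1-j) from
      Finset.sum_congr rfl fun j hj => by
        rw [Finset.mem_range] at hj; unfold dc mm; omega]
    exact Finset.sum_range_reflect (fun j => mm g j) (i+1)
  have part2 : ∑ j ∈ Finset.Ico (i+1) g, dc g i j = ∑ j ∈ Finset.Ico (i+1) g, mm g j := by
    rw [Finset.sum_Ico_eq_sum_range, Finset.sum_Ico_eq_sum_range]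
    rw [show (∑ k ∈ Finset.range (g - (i+1)), dc g i (i+1+k))
        = ∑ k ∈ Finset.range (g - (i+1)), mm g (i+1+(g-(i+1)-1-k)) from
      Finset.sum_congr rfl fun k hk => by
        rw [Finset.mem_range] at hk; unfold dc mm; omega]
    exact Finset.sum_range_reflect (fun k => mm g (i+1+k)) (g - (i+1))
  have comb : (∑ j ∈ Finset.Ico 0 (i+1), dc g i j) + (∑ j ∈ Finset.Ico (i+1) g, dc g i j)
      = ∑ j ∈ Finset.Ico 0 g, dc g i j :=
    Finset.sum_Ico_consecutive _ (by omega) (by omega)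
  have comb2 : (∑ j ∈ Finset.Ico 0 (i+1), mm g j) + (∑ j ∈ Finset.Ico (i+1) g, mm g j)
      = ∑ j ∈ Finset.Ico 0 g, mm g j :=
    Finset.sum_Ico_consecutive _ (by omega) (by omega)
  rw [Finset.range_eq_Ico, ← comb]
  rw [show (∑ j ∈ Finset.Ico 0 (i+1), dc g i j) = ∑ j ∈ Finset.range (i+1), dc g i j by
    rw [Finset.range_eq_Ico]]
  rw [part1, part2]
  rw [show (∑ j ∈ Finset.range (i+1), mm g j) = ∑ j ∈ Finset.Ico 0 (i+1), mm g j by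
    rw [Finset.range_eq_Ico]]
  rw [comb2, ← Finset.range_eq_Ico]
  subst hh
  exact sum_mm hg

lemma sum_eq_of_erase {s : Finset ℕ} {u d c : ℕ} (f : ℕ → ℕ) (hu : u ∈ s)
    (h0 : f u = d) (hf : ∀ v ∈ s, v ≠ u → f v = c) :
    ∑ v ∈ s, f v = d + (s.card - 1) * c := by
  rw [← Finset.add_sum_erase s f hu, h0]
  congr 1
  rw [Finset.sum_congr rfl (fun v hv => hf v (Finset.mem_of_mem_erase hv)
    (Finset.ne_of_mem_erase hv)),
    Finset.sum_const, Finset.card_erase_of_mem hu, smul_eq_mul]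

lemma split4 {g a b n : ℕ} (hn : n = g + 2*a + b + 1) (f : ℕ → ℕ) :
    ∑ v ∈ Finset.range n, f v =
      (∑ v ∈ Finset.Ico 0 g, f v) + (∑ v ∈ Finset.Ico g (g+a+b), f v) +
      (∑ v ∈ Finset.Ico (g+a+b) (g+2*a+b), f v) + f (g+2*a+b) := by
  subst hn
  rw [Finset.sum_range_succ, Finset.range_eq_Ico,
    ← Finset.sum_Ico_consecutive f (show 0 ≤ g by omega) (show g ≤ g+2*a+b by omega),
    ← Finset.sum_Ico_consecutive f (show g ≤ g+a+b by omega) (show g+a+b ≤ g+2*a+b by omega)]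
  ring

section rows
set_option linter.unusedSectionVars false
variable {g a b n h : ℕ} (hh : g = 2*h) (hg : 2 ≤ h) (ha : 1 ≤ a) (hb : 1 ≤ b)
    (hn : n = g + 2*a + b + 1)
include hh hg ha hb hn

lemma sum_mm_g : ∑ v ∈ Finset.range g, mm g v = h*h := by
  rw [hh]; exact sum_mm hg

lemma row_cyc (i : ℕ) (hi : i < g) :
    ∑ v ∈ Finset.range n, dfun g a b n i v
      = h*h + (a+b) * (mm g i + 1) + a * (mm g i + 2) + (dc g i 1 + 1) := by
  rw [split4 hn]
  have b1 : ∑ v ∈ Finset.Ico 0 g, dfun g a b n i v = h*h := by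
    rw [← Finset.range_eq_Ico,
      Finset.sum_congr rfl (fun v hv => ev_cc hh hg ha hb hn hi (Finset.mem_range.mp hv))]
    exact sum_dc hh hg i hi
  have b2 : ∑ v ∈ Finset.Ico g (g+a+b), dfun g a b n i v = (a+b) * (mm g i + 1) := by
    have e : ∀ v ∈ Finset.Ico g (g+a+b), dfun g a b n i v = mm g i + 1 := fun v hv => by
      rw [Finset.mem_Ico] at hv; exact ev_cl hh hg ha hb hn hi hv.1 hv.2
    rw [Finset.sum_congr rfl e, Finset.sum_const, Nat.card_Ico,
      show g+a+b-g = a+b by omega, smul_eq_mul]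
  have b3 : ∑ v ∈ Finset.Ico (g+a+b) (g+2*a+b), dfun g a b n i v = a * (mm g i + 2) := by
    have e : ∀ v ∈ Finset.Ico (g+a+b) (g+2*a+b), dfun g a b n i v = mm g i + 2 :=
      fun v hv => by
        rw [Finset.mem_Ico] at hv; exact ev_cp hh hg ha hb hn hi hv.1 (by omega)
    rw [Finset.sum_congr rfl e, Finset.sum_const, Nat.card_Ico,
      show g+2*a+b-(g+a+b) = a by omega, smul_eq_mul]
  have b4 : dfun g a b n i (g+2*a+b) = dc g i 1 + 1 :=
    ev_cq hh hg ha hb hn hi (by omega)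
  rw [b1, b2, b3, b4]

lemma row_leafA (u : ℕ) (hu1 : g ≤ u) (hu2 : u < g+a) :
    ∑ v ∈ Finset.range n, dfun g a b n u v
      = (h*h + g) + (a+b-1)*2 + (1 + (a-1)*3) + 3 := by
  rw [split4 hn]
  have b1 : ∑ v ∈ Finset.Ico 0 g, dfun g a b n u v = h*h + g := by
    have e : ∀ v ∈ Finset.range g, dfun g a b n u v = mm g v + 1 := fun v hv =>
      ev_lc hh hg ha hb hn hu1 (by omega) (Finset.mem_range.mp hv)
    rw [← Finset.range_eq_Ico, Finset.sum_congr rfl e, Finset.sum_add_distrib,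
      sum_mm_g hh hg ha hb hn, Finset.sum_const, Finset.card_range, smul_eq_mul]
    omega
  have b2 : ∑ v ∈ Finset.Ico g (g+a+b), dfun g a b n u v = (a+b-1)*2 := by
    have h0 : dfun g a b n u u = 0 := dfun_self g a b n u
    have hf : ∀ v ∈ Finset.Ico g (g+a+b), v ≠ u → dfun g a b n u v = 2 := fun v hv hne => by
      rw [Finset.mem_Ico] at hv
      rw [ev_ll hh hg ha hb hn hu1 (by omega) hv.1 hv.2, if_neg (fun hc => hne hc.symm)]
    rw [sum_eq_of_erase (fun v => dfun g a b n u v)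
      (Finset.mem_Ico.mpr ⟨hu1, by omega⟩) h0 hf, Nat.card_Ico]
    omega
  have b3 : ∑ v ∈ Finset.Ico (g+a+b) (g+2*a+b), dfun g a b n u v = 1 + (a-1)*3 := by
    have h0 : dfun g a b n u (u+a+b) = 1 := by
      rw [ev_lp hh hg ha hb hn hu1 (by omega) (by omega) (by omega), if_pos rfl]
    have hf : ∀ v ∈ Finset.Ico (g+a+b) (g+2*a+b), v ≠ u+a+b → dfun g a b n u v = 3 :=
      fun v hv hne => by
        rw [Finset.mem_Ico] at hv
        rw [ev_lp hh hg ha hb hn hu1 (by omega) hv.1 (by omega), if_neg hne]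
    rw [sum_eq_of_erase (fun v => dfun g a b n u v)
      (Finset.mem_Ico.mpr (show g+a+b ≤ u+a+b ∧ u+a+b < g+2*a+b by omega)) h0 hf,
      Nat.card_Ico]
    omega
  have b4 : dfun g a b n u (g+2*a+b) = 3 :=
    ev_lq hh hg ha hb hn hu1 (by omega) (by omega)
  rw [b1, b2, b3, b4]

lemma row_leafB (u : ℕ) (hu1 : g+a ≤ u) (hu2 : u < g+a+b) :
    ∑ v ∈ Finset.range n, dfun g a b n u v
      = (h*h + g) + (a+b-1)*2 + a*3 + 3 := by
  rw [split4 hn]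
  have b1 : ∑ v ∈ Finset.Ico 0 g, dfun g a b n u v = h*h + g := by
    have e : ∀ v ∈ Finset.range g, dfun g a b n u v = mm g v + 1 := fun v hv =>
      ev_lc hh hg ha hb hn (by omega) hu2 (Finset.mem_range.mp hv)
    rw [← Finset.range_eq_Ico, Finset.sum_congr rfl e, Finset.sum_add_distrib,
      sum_mm_g hh hg ha hb hn, Finset.sum_const, Finset.card_range, smul_eq_mul]
    omega
  have b2 : ∑ v ∈ Finset.Ico g (g+a+b), dfun g a b n u v = (a+b-1)*2 := by
    have h0 : dfun g a b n u u = 0 := dfun_self g a b n u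
    have hf : ∀ v ∈ Finset.Ico g (g+a+b), v ≠ u → dfun g a b n u v = 2 := fun v hv hne => by
      rw [Finset.mem_Ico] at hv
      rw [ev_ll hh hg ha hb hn (by omega) hu2 hv.1 hv.2, if_neg (fun hc => hne hc.symm)]
    rw [sum_eq_of_erase (fun v => dfun g a b n u v)
      (Finset.mem_Ico.mpr ⟨by omega, hu2⟩) h0 hf, Nat.card_Ico]
    omega
  have b3 : ∑ v ∈ Finset.Ico (g+a+b) (g+2*a+b), dfun g a b n u v = a*3 := by
    have e : ∀ v ∈ Finset.Ico (g+a+b) (g+2*a+b), dfun g a b n u v = 3 := fun v hv => by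
      rw [Finset.mem_Ico] at hv
      rw [ev_lp hh hg ha hb hn (by omega) hu2 hv.1 (by omega), if_neg (by omega)]
    rw [Finset.sum_congr rfl e, Finset.sum_const, Nat.card_Ico,
      show g+2*a+b-(g+a+b) = a by omega, smul_eq_mul]
  have b4 : dfun g a b n u (g+2*a+b) = 3 :=
    ev_lq hh hg ha hb hn (by omega) hu2 (by omega)
  rw [b1, b2, b3, b4]

lemma row_pend (u : ℕ) (hu1 : g+a+b ≤ u) (hu2 : u < g+2*a+b) :
    ∑ v ∈ Finset.range n, dfun g a b n u v
      = (h*h + 2*g) + (1 + (a+b-1)*3) + (a-1)*4 + 4 := by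
  rw [split4 hn]
  have b1 : ∑ v ∈ Finset.Ico 0 g, dfun g a b n u v = h*h + 2*g := by
    have e : ∀ v ∈ Finset.range g, dfun g a b n u v = mm g v + 2 := fun v hv =>
      ev_pc hh hg ha hb hn hu1 (by omega) (Finset.mem_range.mp hv)
    rw [← Finset.range_eq_Ico, Finset.sum_congr rfl e, Finset.sum_add_distrib,
      sum_mm_g hh hg ha hb hn, Finset.sum_const, Finset.card_range, smul_eq_mul]
    omega
  have b2 : ∑ v ∈ Finset.Ico g (g+a+b), dfun g a b n u v = 1 + (a+b-1)*3 := by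
    have h0 : dfun g a b n u (u-(a+b)) = 1 := by
      rw [ev_pl hh hg ha hb hn hu1 (by omega) (by omega) (by omega), if_pos (by omega)]
    have hf : ∀ v ∈ Finset.Ico g (g+a+b), v ≠ u-(a+b) → dfun g a b n u v = 3 :=
      fun v hv hne => by
        rw [Finset.mem_Ico] at hv
        rw [ev_pl hh hg ha hb hn hu1 (by omega) hv.1 hv.2, if_neg (by omega)]
    rw [sum_eq_of_erase (fun v => dfun g a b n u v)
      (Finset.mem_Ico.mpr (show g ≤ u-(a+b) ∧ u-(a+b) < g+a+b by omega)) h0 hf,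
      Nat.card_Ico]
    omega
  have b3 : ∑ v ∈ Finset.Ico (g+a+b) (g+2*a+b), dfun g a b n u v = (a-1)*4 := by
    have h0 : dfun g a b n u u = 0 := dfun_self g a b n u
    have hf : ∀ v ∈ Finset.Ico (g+a+b) (g+2*a+b), v ≠ u → dfun g a b n u v = 4 :=
      fun v hv hne => by
        rw [Finset.mem_Ico] at hv
        rw [ev_pp hh hg ha hb hn hu1 (by omega) hv.1 (by omega),
          if_neg (fun hc => hne hc.symm)]
    rw [sum_eq_of_erase (fun v => dfun g a b n u v)
      (Finset.mem_Ico.mpr ⟨hu1, hu2⟩) h0 hf, Nat.card_Ico]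
    omega
  have b4 : dfun g a b n u (g+2*a+b) = 4 :=
    ev_pq hh hg ha hb hn hu1 (by omega) (by omega)
  rw [b1, b2, b3, b4]

lemma row_q :
    ∑ v ∈ Finset.range n, dfun g a b n (g+2*a+b) v
      = (h*h + g) + (a+b)*3 + a*4 + 0 := by
  rw [split4 hn]
  have b1 : ∑ v ∈ Finset.Ico 0 g, dfun g a b n (g+2*a+b) v = h*h + g := by
    have e : ∀ v ∈ Finset.range g, dfun g a b n (g+2*a+b) v = dc g 1 v + 1 := fun v hv =>
      ev_qc hh hg ha hb hn (by omega) (Finset.mem_range.mp hv)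
    have e2 : ∀ v ∈ Finset.range g, dc g 1 v = dc g v 1 := fun v _ => by unfold dc mm; omega
    rw [← Finset.range_eq_Ico, Finset.sum_congr rfl e, Finset.sum_add_distrib,
      Finset.sum_congr rfl e2, Finset.sum_const, Finset.card_range, smul_eq_mul]
    have e3 : ∑ v ∈ Finset.range g, dc g v 1 = h*h := by
      have e4 : ∀ v ∈ Finset.range g, dc g v 1 = dc g 1 v := fun v _ => by unfold dc mm; omega
      rw [Finset.sum_congr rfl e4]
      exact sum_dc hh hg 1 (by omega)
    rw [e3]; omega
  have b2 : ∑ v ∈ Finset.Ico g (g+a+b), dfun g a b n (g+2*a+b) v = (a+b)*3 := by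
    have e : ∀ v ∈ Finset.Ico g (g+a+b), dfun g a b n (g+2*a+b) v = 3 := fun v hv => by
      rw [Finset.mem_Ico] at hv
      exact ev_ql hh hg ha hb hn (by omega) hv.1 hv.2
    rw [Finset.sum_congr rfl e, Finset.sum_const, Nat.card_Ico,
      show g+a+b-g = a+b by omega, smul_eq_mul]
  have b3 : ∑ v ∈ Finset.Ico (g+a+b) (g+2*a+b), dfun g a b n (g+2*a+b) v = a*4 := by
    have e : ∀ v ∈ Finset.Ico (g+a+b) (g+2*a+b), dfun g a b n (g+2*a+b) v = 4 :=
      fun v hv => by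
        rw [Finset.mem_Ico] at hv
        exact ev_qp hh hg ha hb hn (by omega) hv.1 (by omega)
    rw [Finset.sum_congr rfl e, Finset.sum_const, Nat.card_Ico,
      show g+2*a+b-(g+a+b) = a by omega, smul_eq_mul]
  have b4 : dfun g a b n (g+2*a+b) (g+2*a+b) = 0 := dfun_self g a b n _
  rw [b1, b2, b3, b4]

lemma total :
    ∑ u ∈ Finset.range n, ∑ v ∈ Finset.range n, dfun g a b n u v
      = 2 * (h*h*h + h*h + 2*h + (a+b)*(h*h+2*h) + a*(h*h+4*h)
          + (a+b)*(a+b) + 3*(a*(a+b)) + 2*(a*a) + 2*(a+b)) := by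
  rw [split4 hn (fun u => ∑ v ∈ Finset.range n, dfun g a b n u v)]
  have oc : ∑ u ∈ Finset.Ico 0 g, ∑ v ∈ Finset.range n, dfun g a b n u v
      = (2*a+b) * (h*h) + h*h + g * (h*h + (a+b) + 2*a + 1) := by
    have e : ∀ i ∈ Finset.range g, (∑ v ∈ Finset.range n, dfun g a b n i v)
        = (2*a+b) * mm g i + dc g i 1 + (h*h + (a+b) + 2*a + 1) := fun i hi => by
      rw [row_cyc hh hg ha hb hn i (Finset.mem_range.mp hi)]; ring
    have e2 : ∀ i ∈ Finset.range g, dc g i 1 = dc g 1 i := fun i _ => by unfold dc mm; omega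
    have e3 : ∑ i ∈ Finset.range g, dc g 1 i = h*h := sum_dc hh hg 1 (by omega)
    rw [← Finset.range_eq_Ico, Finset.sum_congr rfl e, Finset.sum_add_distrib,
      Finset.sum_add_distrib, ← Finset.mul_sum, sum_mm_g hh hg ha hb hn,
      Finset.sum_congr rfl e2, e3, Finset.sum_const, Finset.card_range, smul_eq_mul]
  have olA : ∑ u ∈ Finset.Ico g (g+a), ∑ v ∈ Finset.range n, dfun g a b n u v
      = a * ((h*h + g) + (a+b-1)*2 + (1 + (a-1)*3) + 3) := by
    have e : ∀ u ∈ Finset.Ico g (g+a), (∑ v ∈ Finset.range n, dfun g a b n u v)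
        = (h*h + g) + (a+b-1)*2 + (1 + (a-1)*3) + 3 := fun u hu => by
      rw [Finset.mem_Ico] at hu; exact row_leafA hh hg ha hb hn u hu.1 hu.2
    rw [Finset.sum_congr rfl e, Finset.sum_const, Nat.card_Ico,
      show g+a-g = a by omega, smul_eq_mul]
  have olB : ∑ u ∈ Finset.Ico (g+a) (g+a+b), ∑ v ∈ Finset.range n, dfun g a b n u v
      = b * ((h*h + g) + (a+b-1)*2 + a*3 + 3) := by
    have e : ∀ u ∈ Finset.Ico (g+a) (g+a+b), (∑ v ∈ Finset.range n, dfun g a b n u v)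
        = (h*h + g) + (a+b-1)*2 + a*3 + 3 := fun u hu => by
      rw [Finset.mem_Ico] at hu; exact row_leafB hh hg ha hb hn u hu.1 hu.2
    rw [Finset.sum_congr rfl e, Finset.sum_const, Nat.card_Ico,
      show g+a+b-(g+a) = b by omega, smul_eq_mul]
  have op : ∑ u ∈ Finset.Ico (g+a+b) (g+2*a+b), ∑ v ∈ Finset.range n, dfun g a b n u v
      = a * ((h*h + 2*g) + (1 + (a+b-1)*3) + (a-1)*4 + 4) := by
    have e : ∀ u ∈ Finset.Ico (g+a+b) (g+2*a+b), (∑ v ∈ Finset.range n, dfun g a b n u v)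
        = (h*h + 2*g) + (1 + (a+b-1)*3) + (a-1)*4 + 4 := fun u hu => by
      rw [Finset.mem_Ico] at hu; exact row_pend hh hg ha hb hn u hu.1 hu.2
    rw [Finset.sum_congr rfl e, Finset.sum_const, Nat.card_Ico,
      show g+2*a+b-(g+a+b) = a by omega, smul_eq_mul]
  rw [← Finset.sum_Ico_consecutive (fun u => ∑ v ∈ Finset.range n, dfun g a b n u v)
    (show g ≤ g+a by omega) (show g+a ≤ g+a+b by omega)]
  rw [oc, olA, olB, op, row_q hh hg ha hb hn]
  obtain ⟨a', rfl⟩ : ∃ t, a = t + 1 := ⟨a-1, by omega⟩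
  obtain ⟨b', rfl⟩ : ∃ t, b = t + 1 := ⟨b-1, by omega⟩
  subst hh
  rw [show a'+1+(b'+1)-1 = a'+b'+1 by omega, show a'+1-1 = a' by omega]
  ring

end rows
end WAux

/-- For even `g ≥ 4` and `n ≥ 2β ≥ 3g`,
`W(G*_{(n,g,β)}) = n² + (β − 3g/2 − 1 + ⌊g²/4⌋)n − (g/2)⌊g²/4⌋ + 3g/2 − 3β + 2`. -/
theorem wiener_GstarEven (n g β : ℕ) (heven : Even g) (hg : 4 ≤ g)
    (hβ : 3 * g ≤ 2 * β) (hn : 2 * β ≤ n) :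
    (wienerIndex (GstarEven n g β) : ℚ) =
      (n : ℚ)^2 + ((β : ℚ) - 3 * g / 2 - 1 + ((g^2 / 4 : ℕ) : ℚ)) * n -
        ((g : ℚ) / 2) * ((g^2 / 4 : ℕ) : ℚ) + 3 * (g : ℚ) / 2 - 3 * β + 2 := by
  obtain ⟨H, hH⟩ : ∃ t, g = 2*t := ⟨g/2, by obtain ⟨r, hr⟩ := heven; omega⟩
  have hg2 : 2 ≤ H := by omega
  have ha : 1 ≤ β - g/2 - 1 := by omega
  have hb : 1 ≤ n - 2*β + 1 := by omega
  have hnn : n = g + 2*(β - g/2 - 1) + (n - 2*β + 1) + 1 := by omega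
  have hGG : GstarEven n g β = WAux.GG g (β - g/2 - 1) (n - 2*β + 1) n := rfl
  rw [hGG]
  unfold wienerIndex
  have hsum : (∑ u : Fin n, ∑ v : Fin n, (WAux.GG g (β - g/2 - 1) (n - 2*β + 1) n).dist u v)
      = ∑ u ∈ Finset.range n, ∑ v ∈ Finset.range n,
          WAux.dfun g (β - g/2 - 1) (n - 2*β + 1) n u v := by
    rw [← Fin.sum_univ_eq_sum_range (fun u => ∑ v ∈ Finset.range n,
      WAux.dfun g (β - g/2 - 1) (n - 2*β + 1) n u v) n]
    refine Finset.sum_congr rfl fun u _ => ?_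
    rw [← Fin.sum_univ_eq_sum_range (fun v =>
      WAux.dfun g (β - g/2 - 1) (n - 2*β + 1) n u.val v) n]
    exact Finset.sum_congr rfl fun v _ => WAux.dist_eq hH hg2 ha hb hnn u v
  rw [hsum, WAux.total hH hg2 ha hb hnn,
    Nat.mul_div_cancel_left _ (by norm_num : (0:ℕ) < 2)]
  have cA : ((β - g/2 - 1 : ℕ) : ℚ) = (β:ℚ) - H - 1 := by
    rw [show β - g/2 - 1 = β - (H+1) by omega, Nat.cast_sub (by omega)]
    push_cast; ring
  have cB : ((n - 2*β : ℕ) : ℚ) = (n:ℚ) - 2*β := by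
    rw [Nat.cast_sub hn]; push_cast; ring
  have cG : ((g^2/4 : ℕ) : ℚ) = (H:ℚ)*(H:ℚ) := by
    rw [show g^2/4 = H*H by
      rw [show g^2 = (H*H)*4 by rw [hH]; ring, Nat.mul_div_cancel _ (by norm_num)]]
    push_cast; ring
  have cg : (g:ℚ) = 2*(H:ℚ) := by rw [hH]; push_cast; ring
  rw [cG]
  push_cast
  rw [cA, cB, cg]
  ring
end

section
/- For odd g, the extremal graph G*_{(n,g,β)} (cycle C_g with the tree T*_{β−(g+1)/2, n−2β+1} attached at one cycle vertex by its root) is a unicyclic graph of order n with girth g and matching number exactly β, provided n ≥ 2β ≥ 3g. -/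
open SimpleGraph Finset

/-!
Deleting the cycle edge `s(0, g-1)` leaves a tree: every vertex other than `0` is joined to a
unique smaller vertex, its parent, and a graph given by a decreasing parent function is connected
with one edge per non-root vertex. Hence the graph is connected with `n` edges, and every cycle
uses `s(0, g-1)` together with a tree walk from `0` to `g-1`; such a walk has length at least
`g-1` since the position along the cycle changes by at most one along tree edges.

For the matching number, the even cycle vertices and the `a` star leaves carrying pendant vertices
form a vertex cover of size `(g+1)/2 + a`, and there is a matching with exactly these vertices as
sources: `0` with a bare star leaf, each even cycle vertex `u > 0` with `u - 1`, and each of those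
star leaves with its pendant vertex.
-/

namespace SimpleGraph

variable {V : Type*} {G H : SimpleGraph V}

theorem Walk.abs_sub_le_length (f : V → ℤ) (hf : ∀ x y, G.Adj x y → |f x - f y| ≤ 1) :
    ∀ {u v : V} (p : G.Walk u v), |f u - f v| ≤ p.length
  | _, _, .nil => by simp
  | u, v, .cons (v := w) h p => by
    have := abs_sub_le (f u) (f w) (f v)
    have := p.abs_sub_le_length f hf
    simp only [Walk.length_cons, Nat.cast_add, Nat.cast_one]
    linarith [hf _ _ h]

/-- Cutting a closed trail at the two ends of one of its edges gives two walks between them,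
only one of which uses that edge. -/
theorem Walk.IsTrail.lt_length_of_mem_edges {x u v : V} {c : G.Walk x x} (hc : c.IsTrail)
    (he : s(u, v) ∈ c.edges) {d : ℕ}
    (hd : ∀ p : G.Walk u v, s(u, v) ∉ p.edges → d ≤ p.length) : d < c.length := by
  classical
  have hu := c.fst_mem_support_of_mem_edges he
  have hperm := c.rotate_edges u hu
  set c' := c.rotate u hu
  have hv : v ∈ c'.support := c'.snd_mem_support_of_mem_edges (hperm.mem_iff.mpr he)
  have hsplit := c'.take_spec hv
  set q := c'.takeUntil v hv
  set r := c'.dropUntil v hv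
  have hlen : c.length = q.length + r.length := by
    rw [← c.length_edges, ← hperm.perm.length_eq, ← hsplit, Walk.length_edges,
      Walk.length_append]
  have hnodup : (q.edges ++ r.edges).Nodup := by
    rw [← Walk.edges_append, hsplit]; exact (hc.rotate hu).edges_nodup
  have he' : s(u, v) ∈ q.edges ++ r.edges := by
    rw [← Walk.edges_append, hsplit]; exact hperm.mem_iff.mpr he
  have hpos {a b : V} {p : G.Walk a b} (h : s(u, v) ∈ p.edges) : 0 < p.length :=
    p.length_edges ▸ List.length_pos_of_mem h
  rcases List.mem_append.mp he' with hq | hr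
  · have hr : s(u, v) ∉ r.reverse.edges := by
      rw [Walk.edges_reverse, List.mem_reverse]
      exact List.disjoint_of_nodup_append hnodup hq
    have := hd _ hr
    rw [Walk.length_reverse] at this
    have := hpos hq
    omega
  · have hq : s(u, v) ∉ q.edges := fun hq => List.disjoint_of_nodup_append hnodup hq hr
    have := hd _ hq
    have := hpos hr
    omega

theorem mem_edgeSet_of_mem_edgeSet_sup_edge {u v : V} {e : Sym2 V}
    (he : e ∈ (H ⊔ edge u v).edgeSet) (hne : e ≠ s(u, v)) : e ∈ H.edgeSet := by
  rw [edgeSet_sup] at he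
  exact he.resolve_right fun h => hne (edgeSet_edge_subset h)

theorem IsAcyclic.dist_lt_length_of_isCycle_sup_edge (hH : H.IsAcyclic) {u v w : V}
    {c : (H ⊔ edge u v).Walk w w} (hc : c.IsCycle) : H.dist u v < c.length := by
  by_cases he : s(u, v) ∈ c.edges
  · refine hc.isTrail.lt_length_of_mem_edges he fun p hp => ?_
    have hpH : ∀ e ∈ p.edges, e ∈ H.edgeSet := fun e h =>
      mem_edgeSet_of_mem_edgeSet_sup_edge (p.edges_subset_edgeSet h) (ne_of_mem_of_not_mem h hp)
    exact (p.length_transfer hpH) ▸ dist_le _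
  · have hcH : ∀ e ∈ c.edges, e ∈ H.edgeSet := fun e h =>
      mem_edgeSet_of_mem_edgeSet_sup_edge (c.edges_subset_edgeSet h) (ne_of_mem_of_not_mem h he)
    exact (hH _ (hc.transfer hcH)).elim

def parentGraph (p : V → V) : SimpleGraph V :=
  SimpleGraph.fromRel fun x y => y = p x

section parentGraph

variable [PartialOrder V] {p : V → V}

theorem ncard_edgeSet_parentGraph (hp : ∀ v, p v ≤ v) :
    (parentGraph p).edgeSet.ncard = {v | p v ≠ v}.ncard := by
  have hedges : (parentGraph p).edgeSet = (fun v => s(v, p v)) '' {v | p v ≠ v} := by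
    ext e
    induction e using Sym2.ind with
    | _ x y =>
      simp only [parentGraph, mem_edgeSet, fromRel_adj, Set.mem_image, Set.mem_ofPred_eq]
      constructor
      · rintro ⟨hxy, rfl | rfl⟩
        · exact ⟨x, hxy.symm, rfl⟩
        · exact ⟨y, hxy, Sym2.eq_swap⟩
      · rintro ⟨v, hv, hvxy⟩
        rcases Sym2.eq_iff.mp hvxy with ⟨rfl, rfl⟩ | ⟨rfl, rfl⟩
        · exact ⟨hv.symm, Or.inl rfl⟩
        · exact ⟨hv, Or.inr rfl⟩
  rw [hedges, Set.InjOn.ncard_image]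
  intro v hv w hw hvw
  rcases Sym2.eq_iff.mp hvw with ⟨h, -⟩ | ⟨hvw, hwv⟩
  · exact h
  · refine (hv (le_antisymm (hp v) ?_)).elim
    calc v = p w := hvw
      _ ≤ w := hp w
      _ = p v := hwv.symm

theorem connected_parentGraph [WellFoundedLT V] {r : V} (hp : ∀ v, p v ≤ v)
    (hr : ∀ v, p v = v → v = r) : (parentGraph p).Connected := by
  have hreach (v : V) : (parentGraph p).Reachable v r := by
    induction v using WellFoundedLT.induction with
    | _ v ih =>
      by_cases hv : p v = v
      · exact hr v hv ▸ Reachable.refl v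
      · have hadj : (parentGraph p).Adj v (p v) :=
          (fromRel_adj _ _ _).mpr ⟨Ne.symm hv, Or.inl rfl⟩
        exact hadj.reachable.trans (ih _ (lt_of_le_of_ne (hp v) hv))
  have : Nonempty V := ⟨r⟩
  exact ⟨fun u v => (hreach u).trans (hreach v).symm⟩

theorem isTree_parentGraph [Finite V] {r : V} (hp : ∀ v, p v ≤ v)
    (hr : ∀ v, p v = v ↔ v = r) : (parentGraph p).IsTree := by
  have : Nonempty V := ⟨r⟩
  refine isTree_iff_connected_and_card.mpr
    ⟨connected_parentGraph hp fun v => (hr v).mp, ?_⟩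
  have hroots : {v | p v ≠ v} = {r}ᶜ := by
    ext v
    simp [hr v]
  rw [Nat.card_coe_set_eq, ncard_edgeSet_parentGraph hp, hroots, Set.ncard_compl,
    Set.ncard_singleton, Nat.sub_add_cancel Nat.card_pos]

end parentGraph

theorem Subgraph.IsMatching.ncard_edgeSet_le [Finite V] {M : G.Subgraph} (hM : M.IsMatching)
    {C : Set V} (hC : G.IsVertexCover C) : M.edgeSet.ncard ≤ C.ncard := by
  classical
  have := Fintype.ofFinite V
  rw [Set.ncard_eq_toFinset_card', Set.ncard_eq_toFinset_card']
  refine Finset.card_le_card_of_forall_subsingleton (fun e v => v ∈ e) ?_ ?_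
  · intro e he
    rw [Set.mem_toFinset] at he
    induction e using Sym2.ind with
    | _ x y =>
      rcases hC (M.adj_sub he) with hx | hy
      · exact ⟨x, Set.mem_toFinset.mpr hx, Sym2.mem_mk_left x y⟩
      · exact ⟨y, Set.mem_toFinset.mpr hy, Sym2.mem_mk_right x y⟩
  · rintro v - e ⟨he, hve⟩ e' ⟨he', hve'⟩
    rw [Set.mem_toFinset] at he he'
    obtain ⟨w, rfl⟩ := Sym2.mem_iff_exists.mp hve
    obtain ⟨w', rfl⟩ := Sym2.mem_iff_exists.mp hve'
    rw [hM.eq_of_adj_left (Subgraph.mem_edgeSet.mp he) (Subgraph.mem_edgeSet.mp he')]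

structure IsMatchingRel (G : SimpleGraph V) (R : V → V → Prop) : Prop where
  adj : ∀ ⦃x y⦄, R x y → G.Adj x y
  right_unique : ∀ ⦃x y z⦄, R x y → R x z → y = z
  left_unique : ∀ ⦃x y z⦄, R x z → R y z → x = y
  not_rel_of_rel : ∀ ⦃x y z⦄, R x y → ¬R y z

namespace IsMatchingRel

variable {R : V → V → Prop}

def toSubgraph (hR : G.IsMatchingRel R) : G.Subgraph where
  verts := {x | ∃ y, R x y ∨ R y x}
  Adj x y := R x y ∨ R y x
  adj_sub h := h.elim (fun h => hR.adj h) fun h => (hR.adj h).symm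
  edge_vert h := ⟨_, h⟩
  symm := ⟨fun _ _ h => h.symm⟩

theorem isMatching (hR : G.IsMatchingRel R) : hR.toSubgraph.IsMatching := by
  intro x hx
  obtain ⟨w, hw⟩ : ∃ w, R x w ∨ R w x := hx
  refine ⟨w, hw, fun y hy => ?_⟩
  rcases hw with hw | hw <;> rcases hy with hy | hy
  · exact hR.right_unique hy hw
  · exact (hR.not_rel_of_rel hy hw).elim
  · exact (hR.not_rel_of_rel hw hy).elim
  · exact hR.left_unique hy hw

theorem ncard_edgeSet (hR : G.IsMatchingRel R) :
    hR.toSubgraph.edgeSet.ncard = {x | ∃ y, R x y}.ncard := by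
  symm
  refine Set.ncard_congr (fun x hx => s(x, hx.choose))
    (fun x hx => Subgraph.mem_edgeSet.mpr (Or.inl hx.choose_spec)) ?_ ?_
  · intro x x' hx hx' h
    rcases Sym2.eq_iff.mp h with ⟨h, -⟩ | ⟨h, h'⟩
    · exact h
    · have hx'x : R x' x := h ▸ hx'.choose_spec
      exact (hR.not_rel_of_rel hx'x hx.choose_spec).elim
  · intro e he
    induction e using Sym2.ind with
    | _ x y =>
      rcases Subgraph.mem_edgeSet.mp he with h | h
      · exact ⟨x, ⟨y, h⟩, by rw [hR.right_unique (Exists.choose_spec ⟨y, h⟩) h]⟩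
      · refine ⟨y, ⟨x, h⟩, ?_⟩
        rw [hR.right_unique (Exists.choose_spec ⟨x, h⟩) h, Sym2.eq_swap]

end IsMatchingRel

end SimpleGraph

theorem matchingNumber_eq_of_isVertexCover {V : Type*} [Fintype V] {G : SimpleGraph V}
    {R : V → V → Prop} (hR : G.IsMatchingRel R) (hC : G.IsVertexCover {x | ∃ y, R x y}) :
    matchingNumber G = {x | ∃ y, R x y}.ncard :=
  IsGreatest.csSup_eq ⟨⟨_, hR.isMatching, hR.ncard_edgeSet⟩,
    fun _ ⟨_, hM, hk⟩ => hk ▸ hM.ncard_edgeSet_le hC⟩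

theorem Fin.val_eq_succ_or_of_val_sub_eq_one {m : ℕ} {u v : Fin m} (h : (u - v).val = 1) :
    u.val = v.val + 1 ∨ (u.val = 0 ∧ v.val = m - 1) := by
  have := u.isLt
  rcases le_or_gt v u with huv | huv
  · rw [Fin.coe_sub_iff_le.mpr huv] at h
    omega
  · rw [Fin.coe_sub_iff_lt.mpr huv] at h
    omega

theorem Nat.card_filter_range_mod_two_eq_zero (m : ℕ) :
    #{k ∈ range m | k % 2 = 0} = (m + 1) / 2 := by
  induction m with
  | zero => rfl
  | succ m ih =>
    rw [range_add_one, filter_insert]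
    split_ifs with h
    · rw [card_insert_of_notMem (by simp), ih]
      omega
    · rw [ih]
      omega

def cycleTStar (n g a b : ℕ) : SimpleGraph (Fin n) :=
  SimpleGraph.fromRel fun u v =>
    (u.val + 1 = v.val ∧ v.val < g) ∨
    (u.val = 0 ∧ v.val = g - 1) ∨
    (u.val = 0 ∧ g ≤ v.val ∧ v.val < g + a + b) ∨
    (g ≤ u.val ∧ u.val < g + a ∧ v.val = u.val + a + b)

theorem GstarOdd_eq_cycleTStar (n g β : ℕ) :
    GstarOdd n g β = cycleTStar n g (β - (g + 1) / 2) (n - 2 * β + 1) := rfl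

/-- Truncated subtraction makes `0` the root: `0 - 1 = 0`. -/
def cycleTStarParent (n g a b : ℕ) (v : Fin n) : Fin n :=
  if v.val < g then ⟨v.val - 1, lt_of_le_of_lt (Nat.sub_le _ _) v.isLt⟩
  else if v.val < g + a + b then ⟨0, v.pos⟩
  else ⟨v.val - (a + b), lt_of_le_of_lt (Nat.sub_le _ _) v.isLt⟩

def cyclePosition (g : ℕ) {n : ℕ} (v : Fin n) : ℤ := if v.val < g then v.val else 0

def cycleTStarMatchingRel (n g a b : ℕ) (u v : Fin n) : Prop :=
  (u.val = 0 ∧ v.val = g + a) ∨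
  (u.val % 2 = 0 ∧ 0 < u.val ∧ u.val < g ∧ v.val + 1 = u.val) ∨
  (g ≤ u.val ∧ u.val < g + a ∧ v.val = u.val + a + b)

def cycleTStarCover (g a : ℕ) : Finset ℕ := {k ∈ range g | k % 2 = 0} ∪ Ico g (g + a)

section cycleTStar

variable {n g a b : ℕ}

theorem val_cycleTStarParent (v : Fin n) : (cycleTStarParent n g a b v).val =
    if v.val < g then v.val - 1 else if v.val < g + a + b then 0 else v.val - (a + b) := by
  unfold cycleTStarParent
  split_ifs <;> rfl

theorem cycleTStar_eq_sup_edge (hn : n = g + 2 * a + b) {x y : Fin n}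
    (hx : x.val = 0) (hy : y.val = g - 1) :
    cycleTStar n g a b = parentGraph (cycleTStarParent n g a b) ⊔ edge x y := by
  ext u v
  have := u.isLt
  have := v.isLt
  simp only [cycleTStar, parentGraph, sup_adj, fromRel_adj, edge_adj, ne_eq, Fin.ext_iff,
    val_cycleTStarParent]
  split_ifs <;> omega

theorem cycleTStarParent_le (v : Fin n) : cycleTStarParent n g a b v ≤ v := by
  rw [Fin.le_def, val_cycleTStarParent]
  split_ifs <;> omega

theorem cycleTStarParent_eq_self_iff (hn : n = g + 2 * a + b) {x : Fin n} (hx : x.val = 0)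
    (v : Fin n) : cycleTStarParent n g a b v = v ↔ v = x := by
  have := v.isLt
  rw [Fin.ext_iff, Fin.ext_iff, val_cycleTStarParent, hx]
  split_ifs <;> omega

theorem isTree_parentGraph_cycleTStarParent (hn : n = g + 2 * a + b) {x : Fin n}
    (hx : x.val = 0) : (parentGraph (cycleTStarParent n g a b)).IsTree :=
  isTree_parentGraph cycleTStarParent_le (cycleTStarParent_eq_self_iff hn hx)

theorem abs_cyclePosition_sub_le_of_adj {u v : Fin n}
    (h : (parentGraph (cycleTStarParent n g a b)).Adj u v) :
    |cyclePosition g u - cyclePosition g v| ≤ 1 := by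
  rw [parentGraph, fromRel_adj] at h
  rw [abs_le]
  simp only [cyclePosition, val_cycleTStarParent, Fin.ext_iff] at h ⊢
  split_ifs at h ⊢ <;> omega

theorem cycleGraph_isContained_cycleTStar (hgn : g ≤ n) :
    cycleGraph g ⊑ cycleTStar n g a b := by
  refine ⟨⟨⟨Fin.castLE hgn, fun {u v} huv => ?_⟩, Fin.castLE_injective hgn⟩⟩
  have := u.isLt
  have := v.isLt
  simp only [cycleTStar, fromRel_adj, ne_eq, Fin.ext_iff, Fin.val_castLE]
  rcases cycleGraph_adj'.mp huv with h | h <;>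
    rcases Fin.val_eq_succ_or_of_val_sub_eq_one h with h | h <;> omega

theorem exists_cycleTStar_eq_sup_edge (hg : 0 < g) (hn : n = g + 2 * a + b) :
    ∃ x y : Fin n, x.val = 0 ∧ y.val = g - 1 ∧
      cycleTStar n g a b = parentGraph (cycleTStarParent n g a b) ⊔ edge x y :=
  ⟨⟨0, by omega⟩, ⟨g - 1, by omega⟩, rfl, rfl, cycleTStar_eq_sup_edge hn rfl rfl⟩

theorem cycleTStar_connected (hg : 0 < g) (hn : n = g + 2 * a + b) :
    (cycleTStar n g a b).Connected := by
  obtain ⟨x, y, hx, -, hG⟩ := exists_cycleTStar_eq_sup_edge (by omega) hn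
  rw [hG]
  exact (isTree_parentGraph_cycleTStarParent hn hx).connected.mono le_sup_left

theorem cycleTStar_ncard_edgeSet (hg : 3 ≤ g) (hn : n = g + 2 * a + b) :
    (cycleTStar n g a b).edgeSet.ncard = n := by
  obtain ⟨x, y, hx, hy, hG⟩ := exists_cycleTStar_eq_sup_edge (by omega) hn
  have hxy : x ≠ y := by rw [ne_eq, Fin.ext_iff]; omega
  have hxyT : s(x, y) ∉ (parentGraph (cycleTStarParent n g a b)).edgeSet := by
    simp only [mem_edgeSet, parentGraph, fromRel_adj, Fin.ext_iff, val_cycleTStarParent, hx, hy]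
    split_ifs <;> omega
  have hcard := (isTree_iff_connected_and_card.mp (isTree_parentGraph_cycleTStarParent hn hx)).2
  rw [Nat.card_coe_set_eq, Nat.card_eq_fintype_card, Fintype.card_fin] at hcard
  rw [hG, edgeSet_sup, edgeSet_edge_of_ne hxy, Set.union_singleton,
    Set.ncard_insert_of_notMem hxyT, hcard]

theorem le_dist_parentGraph_cycleTStarParent (hg : 1 ≤ g) (hn : n = g + 2 * a + b) {x y : Fin n}
    (hx : x.val = 0) (hy : y.val = g - 1) :
    g - 1 ≤ (parentGraph (cycleTStarParent n g a b)).dist x y := by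
  obtain ⟨p, hp⟩ :=
    (isTree_parentGraph_cycleTStarParent hn hx).connected.exists_walk_length_eq_dist x y
  have := p.abs_sub_le_length (cyclePosition g) fun _ _ => abs_cyclePosition_sub_le_of_adj
  rw [hp, cyclePosition, cyclePosition, if_pos (by omega), if_pos (by omega), hx, hy,
    abs_le] at this
  omega

theorem cycleTStar_girth (hg : 3 ≤ g) (hn : n = g + 2 * a + b) :
    (cycleTStar n g a b).girth = g := by
  have hC : cycleGraph g ⊑ cycleTStar n g a b := cycleGraph_isContained_cycleTStar (by omega)
  obtain ⟨x, y, hx, hy, hG⟩ := exists_cycleTStar_eq_sup_edge (by omega) hn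
  rw [hG] at hC ⊢
  obtain ⟨v, c, hc, hlen⟩ := (cycleGraph_isContained_iff hg).mp hC
  obtain ⟨w, c', hc', hgirth⟩ := exists_girth_eq_length.mpr fun h => h c hc
  refine le_antisymm ((girth_le_length hc).trans_eq hlen) ?_
  have := (isTree_parentGraph_cycleTStarParent hn hx).isAcyclic
    |>.dist_lt_length_of_isCycle_sup_edge hc'
  have := le_dist_parentGraph_cycleTStarParent (by omega) hn hx hy
  omega

theorem isMatchingRel_cycleTStarMatchingRel (hg : 0 < g) (hb : 1 ≤ b) :
    (cycleTStar n g a b).IsMatchingRel (cycleTStarMatchingRel n g a b) where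
  adj u v h := by
    simp only [cycleTStarMatchingRel, cycleTStar, fromRel_adj, ne_eq, Fin.ext_iff] at h ⊢
    omega
  right_unique u v w huv huw := by
    simp only [cycleTStarMatchingRel, Fin.ext_iff] at huv huw ⊢
    omega
  left_unique u v w huw hvw := by
    simp only [cycleTStarMatchingRel, Fin.ext_iff] at huw hvw ⊢
    omega
  not_rel_of_rel u v w huv hvw := by
    simp only [cycleTStarMatchingRel] at huv hvw
    omega

theorem card_cycleTStarCover : #(cycleTStarCover g a) = (g + 1) / 2 + a := by
  have hdisj : Disjoint {k ∈ range g | k % 2 = 0} (Ico g (g + a)) := by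
    rw [Finset.disjoint_left]
    intro k hk hk'
    simp only [mem_filter, mem_range, mem_Ico] at hk hk'
    omega
  rw [cycleTStarCover, card_union_of_disjoint hdisj, Nat.card_filter_range_mod_two_eq_zero,
    Nat.card_Ico, Nat.add_sub_cancel_left]

theorem ncard_preimage_val_cycleTStarCover (hn : n = g + 2 * a + b) :
    (Fin.val ⁻¹' ↑(cycleTStarCover g a) : Set (Fin n)).ncard = (g + 1) / 2 + a := by
  have hrange : ↑(cycleTStarCover g a) ⊆ Set.range (Fin.val (n := n)) := by
    intro k hk
    simp only [cycleTStarCover, coe_union, coe_filter, coe_Ico, Set.mem_union, Set.mem_ofPred_eq,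
      mem_range, Set.mem_Ico] at hk
    exact ⟨⟨k, by omega⟩, rfl⟩
  rw [Set.ncard_preimage_of_injective_subset_range Fin.val_injective hrange, Set.ncard_coe_finset,
    card_cycleTStarCover]

theorem isVertexCover_preimage_val_cycleTStarCover (hg : 0 < g) :
    (cycleTStar n g a b).IsVertexCover (Fin.val ⁻¹' ↑(cycleTStarCover g a)) := by
  intro u v huv
  simp only [cycleTStarCover, Set.mem_preimage, coe_union, coe_filter, coe_Ico, Set.mem_union,
    Set.mem_ofPred_eq, mem_range, Set.mem_Ico]
  simp only [cycleTStar, fromRel_adj, ne_eq, Fin.ext_iff] at huv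
  omega

theorem setOf_exists_cycleTStarMatchingRel (hg : 0 < g) (hn : n = g + 2 * a + b) (hb : 1 ≤ b) :
    {u | ∃ v, cycleTStarMatchingRel n g a b u v} = Fin.val ⁻¹' ↑(cycleTStarCover g a) := by
  ext u
  have := u.isLt
  simp only [Set.mem_ofPred_eq, Set.mem_preimage, cycleTStarCover, coe_union, coe_filter, coe_Ico,
    Set.mem_union, mem_range, Set.mem_Ico, cycleTStarMatchingRel]
  constructor
  · rintro ⟨v, hv⟩
    omega
  · rintro (⟨hu, hu2⟩ | ⟨hu, hu'⟩)
    · rcases Nat.eq_zero_or_pos u.val with h0 | hpos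
      · exact ⟨⟨g + a, by omega⟩, Or.inl ⟨h0, rfl⟩⟩
      · exact ⟨⟨u.val - 1, by omega⟩,
          Or.inr (Or.inl ⟨hu2, hpos, hu, Nat.sub_add_cancel hpos⟩)⟩
    · exact ⟨⟨u.val + a + b, by omega⟩, Or.inr (Or.inr ⟨hu, hu', rfl⟩)⟩

theorem cycleTStar_matchingNumber (hg : 0 < g) (hn : n = g + 2 * a + b) (hb : 1 ≤ b) :
    matchingNumber (cycleTStar n g a b) = (g + 1) / 2 + a := by
  have hsrc := setOf_exists_cycleTStarMatchingRel hg hn hb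
  have hcover := hsrc ▸ isVertexCover_preimage_val_cycleTStarCover (b := b) hg
  rw [matchingNumber_eq_of_isVertexCover (isMatchingRel_cycleTStarMatchingRel hg hb) hcover, hsrc,
    ncard_preimage_val_cycleTStarCover hn]

end cycleTStar

/-- For odd `g ≥ 3` and `n ≥ 2β ≥ 3g`, `G*_{(n,g,β)}` is a unicyclic graph (connected with
exactly as many edges as vertices) of order `n` with girth `g` and matching number `β`. -/
theorem GstarOdd_unicyclic (n g β : ℕ) (hodd : Odd g) (hg : 3 ≤ g)
    (hβ : 3 * g ≤ 2 * β) (hn : 2 * β ≤ n) :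
    (GstarOdd n g β).Connected ∧ (GstarOdd n g β).edgeSet.ncard = n ∧
      (GstarOdd n g β).girth = g ∧ matchingNumber (GstarOdd n g β) = β := by
  have hg2 : g % 2 = 1 := Nat.odd_iff.mp hodd
  have hsize : n = g + 2 * (β - (g + 1) / 2) + (n - 2 * β + 1) := by omega
  rw [GstarOdd_eq_cycleTStar]
  refine ⟨cycleTStar_connected (by omega) hsize, cycleTStar_ncard_edgeSet hg hsize,
    cycleTStar_girth hg hsize, ?_⟩
  rw [cycleTStar_matchingNumber (by omega) hsize (by omega)]
  omega
end

section
/- For g odd and n ≥ 2β ≥ 3g, moving one pendant vertex: W(U(T*_{a₁,0}, T*_{0,0},…,T*_{0,0})) > W(U(T*_{a₁−1,2}, T*_{0,0},…,T*_{0,0})), where both graphs have order n = 2a₁ + g (resp. 2(a₁−1)+2+g) and the same matching number. -/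
/-!
Distances in the one-point union `G₁ ∨ G₂` split at the cut vertex: `d(u, w)` is the sum of the
distances between the images of `u` and `w` under the two retractions onto `G₁` and `G₂`. Hence
`W(C_g ∨ T)` depends on the tree `T` only through `W(T)` and the transmission of its root, with
weight `g - 1` on the latter. Both trees have `2a + 1` vertices; moving the pendant vertex to the
root lowers `W(T)` by `2a - 2` and the root transmission by `1`, so the Wiener index drops by
`2a + g - 3 > 0`.
-/

open SimpleGraph Finset

/-- The one-point union (wedge) of `G₁` and `G₂` obtained by identifying the vertex `x` of
`G₁` with the vertex `y` of `G₂`. -/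
def wedge {V₁ V₂ : Type*} (G₁ : SimpleGraph V₁) (G₂ : SimpleGraph V₂) (x : V₁) (y : V₂) :
    SimpleGraph {v : V₁ ⊕ V₂ // v ≠ Sum.inr y} :=
  SimpleGraph.fromRel fun u v =>
    (∃ a b : V₁, u.val = Sum.inl a ∧ v.val = Sum.inl b ∧ G₁.Adj a b) ∨
    (∃ a b : V₂, u.val = Sum.inr a ∧ v.val = Sum.inr b ∧ G₂.Adj a b) ∨
    (∃ b : V₂, u.val = Sum.inl x ∧ v.val = Sum.inr b ∧ G₂.Adj y b)

namespace SimpleGraph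

variable {V : Type*} {G : SimpleGraph V} {f : V → ℕ}

theorem Walk.le_add_length_of_lipschitz (hf : ∀ v w, G.Adj v w → f w ≤ f v + 1) {u v : V}
    (p : G.Walk u v) : f v ≤ f u + p.length := by
  induction p with
  | nil => simp
  | cons h _ ih => have := hf _ _ h; rw [Walk.length_cons]; omega

theorem Reachable.le_add_dist_of_lipschitz (hf : ∀ v w, G.Adj v w → f w ≤ f v + 1) {u v : V}
    (h : G.Reachable u v) : f v ≤ f u + G.dist u v := by
  obtain ⟨p, hp⟩ := h.exists_walk_length_eq_dist
  exact hp ▸ p.le_add_length_of_lipschitz hf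

theorem exists_walk_length_eq_of_descent {u : V} (hzero : ∀ v, f v = 0 → v = u)
    (hdesc : ∀ v, f v ≠ 0 → ∃ w, G.Adj w v ∧ f w + 1 = f v) (v : V) :
    ∃ p : G.Walk u v, p.length = f v := by
  induction hn : f v generalizing v with
  | zero => exact hzero v hn ▸ ⟨Walk.nil, rfl⟩
  | succ n ih =>
    obtain ⟨w, hwv, hw⟩ := hdesc v (by omega)
    obtain ⟨p, hp⟩ := ih w (by omega)
    exact ⟨p.concat hwv, by rw [Walk.length_concat, hp]⟩

theorem dist_eq_of_lipschitz_of_descent {u : V} (hu : f u = 0) (hzero : ∀ v, f v = 0 → v = u)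
    (hf : ∀ v w, G.Adj v w → f w ≤ f v + 1)
    (hdesc : ∀ v, f v ≠ 0 → ∃ w, G.Adj w v ∧ f w + 1 = f v) (v : V) : G.dist u v = f v := by
  obtain ⟨p, hp⟩ := exists_walk_length_eq_of_descent hzero hdesc v
  have hle := Reachable.le_add_dist_of_lipschitz hf ⟨p⟩
  have hge := hp ▸ dist_le p
  omega

theorem dist_map_le {W : Type*} {H : SimpleGraph W} (φ : G →g H) {u v : V} (h : G.Reachable u v) :
    H.dist (φ u) (φ v) ≤ G.dist u v := by
  obtain ⟨p, hp⟩ := h.exists_walk_length_eq_dist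
  exact hp ▸ (p.length_map φ) ▸ dist_le (p.map φ)

end SimpleGraph

section Wedge

variable {V₁ V₂ : Type*}

def wedgeRetractLeft (x : V₁) : V₁ ⊕ V₂ → V₁ := Sum.elim id fun _ => x

def wedgeRetractRight (y : V₂) : V₁ ⊕ V₂ → V₂ := Sum.elim (fun _ => y) id

def wedgeInl (G₁ : SimpleGraph V₁) (G₂ : SimpleGraph V₂) (x : V₁) (y : V₂) :
    G₁ →g wedge G₁ G₂ x y where
  toFun a := ⟨Sum.inl a, Sum.inl_ne_inr⟩
  map_rel' h := by
    simp only [wedge, fromRel_adj, ne_eq, Subtype.mk.injEq, Sum.inl.injEq]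
    exact ⟨h.ne, Or.inl (Or.inl ⟨_, _, rfl, rfl, h⟩)⟩

/-- The vertex `y` of `G₂` is sent to the glued vertex `inl x`. -/
def wedgeInr [DecidableEq V₂] (G₁ : SimpleGraph V₁) (G₂ : SimpleGraph V₂) (x : V₁) (y : V₂) :
    G₂ →g wedge G₁ G₂ x y where
  toFun t := if h : t = y then ⟨Sum.inl x, Sum.inl_ne_inr⟩ else ⟨Sum.inr t, by simpa using h⟩
  map_rel' {s t} h := by
    by_cases hs : s = y <;> by_cases ht : t = y
    · exact absurd (hs.trans ht.symm) h.ne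
    all_goals simp only [hs, ht, dif_pos, dif_neg, not_false_eq_true, wedge, fromRel_adj, ne_eq,
      Subtype.mk.injEq, reduceCtorEq, Sum.inr.injEq]
    · exact ⟨trivial, Or.inl (Or.inr (Or.inr ⟨t, trivial, rfl, hs ▸ h⟩))⟩
    · exact ⟨trivial, Or.inr (Or.inr (Or.inr ⟨s, trivial, rfl, ht ▸ h.symm⟩))⟩
    · exact ⟨h.ne, Or.inl (Or.inr (Or.inl ⟨s, t, rfl, rfl, h⟩))⟩

variable {G₁ : SimpleGraph V₁} {G₂ : SimpleGraph V₂} {x : V₁} {y : V₂}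

@[simp]
theorem wedgeRetractLeft_wedgeInl (a : V₁) :
    wedgeRetractLeft x (wedgeInl G₁ G₂ x y a).1 = a := rfl

@[simp]
theorem wedgeRetractRight_wedgeInl (a : V₁) :
    wedgeRetractRight y (wedgeInl G₁ G₂ x y a).1 = y := rfl

@[simp]
theorem wedgeRetractLeft_wedgeInr [DecidableEq V₂] (t : V₂) :
    wedgeRetractLeft x (wedgeInr G₁ G₂ x y t).1 = x := by
  by_cases ht : t = y <;> simp [wedgeInr, wedgeRetractLeft, ht]

@[simp]
theorem wedgeRetractRight_wedgeInr [DecidableEq V₂] (t : V₂) :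
    wedgeRetractRight y (wedgeInr G₁ G₂ x y t).1 = t := by
  by_cases ht : t = y <;> simp [wedgeInr, wedgeRetractRight, ht]

variable (G₁ G₂ x y) in
theorem wedgeInr_self [DecidableEq V₂] : wedgeInr G₁ G₂ x y y = wedgeInl G₁ G₂ x y x := by
  simp [wedgeInr, wedgeInl]

variable (G₁ G₂ x) in
theorem wedge_mem_range_inl_or_inr [DecidableEq V₂] (u : {v : V₁ ⊕ V₂ // v ≠ Sum.inr y}) :
    u ∈ Set.range (wedgeInl G₁ G₂ x y) ∨ u ∈ Set.range (wedgeInr G₁ G₂ x y) := by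
  obtain ⟨a | t, hu⟩ := u
  · exact Or.inl ⟨a, rfl⟩
  · have ht : t ≠ y := fun h => hu (h ▸ rfl)
    exact Or.inr ⟨t, by simp [wedgeInr, ht]⟩

theorem wedge_connected (h₁ : G₁.Connected) (h₂ : G₂.Connected) :
    (wedge G₁ G₂ x y).Connected := by
  classical
  refine (connected_iff_exists_forall_reachable _).mpr ⟨wedgeInl G₁ G₂ x y x, fun u => ?_⟩
  rcases wedge_mem_range_inl_or_inr G₁ G₂ x u with ⟨a, rfl⟩ | ⟨t, rfl⟩
  · exact (h₁ x a).map (wedgeInl G₁ G₂ x y)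
  · exact wedgeInr_self G₁ G₂ x y ▸ (h₂ y t).map (wedgeInr G₁ G₂ x y)

theorem wedge_adj_retract {p q : {v : V₁ ⊕ V₂ // v ≠ Sum.inr y}}
    (h : (wedge G₁ G₂ x y).Adj p q) :
    (wedgeRetractRight y p.1 = wedgeRetractRight y q.1 ∧
        G₁.Adj (wedgeRetractLeft x p.1) (wedgeRetractLeft x q.1)) ∨
      (wedgeRetractLeft x p.1 = wedgeRetractLeft x q.1 ∧
        G₂.Adj (wedgeRetractRight y p.1) (wedgeRetractRight y q.1)) := by
  obtain ⟨p, _⟩ := p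
  obtain ⟨q, _⟩ := q
  simp only [wedge, fromRel_adj] at h
  obtain ⟨-, (⟨a, b, rfl, rfl, h⟩ | ⟨s, t, rfl, rfl, h⟩ | ⟨t, rfl, rfl, h⟩) |
    (⟨a, b, rfl, rfl, h⟩ | ⟨s, t, rfl, rfl, h⟩ | ⟨t, rfl, rfl, h⟩)⟩ := h <;>
    simp [wedgeRetractLeft, wedgeRetractRight, h, h.symm]

theorem wedge_dist_lipschitz (c₁ : V₁) (c₂ : V₂) {p q : {v : V₁ ⊕ V₂ // v ≠ Sum.inr y}}
    (h : (wedge G₁ G₂ x y).Adj p q) :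
    G₁.dist c₁ (wedgeRetractLeft x q.1) + G₂.dist c₂ (wedgeRetractRight y q.1) ≤
      G₁.dist c₁ (wedgeRetractLeft x p.1) + G₂.dist c₂ (wedgeRetractRight y p.1) + 1 := by
  rcases wedge_adj_retract h with ⟨heq, hadj⟩ | ⟨heq, hadj⟩
  · have := hadj.reachable.dist_triangle_right c₁
    rw [dist_eq_one_iff_adj.mpr hadj] at this
    rw [heq]
    omega
  · have := hadj.reachable.dist_triangle_right c₂
    rw [dist_eq_one_iff_adj.mpr hadj] at this
    rw [heq]
    omega

theorem wedge_dist (h₁ : G₁.Connected) (h₂ : G₂.Connected)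
    (u w : {v : V₁ ⊕ V₂ // v ≠ Sum.inr y}) :
    (wedge G₁ G₂ x y).dist u w =
      G₁.dist (wedgeRetractLeft x u.1) (wedgeRetractLeft x w.1) +
        G₂.dist (wedgeRetractRight y u.1) (wedgeRetractRight y w.1) := by
  classical
  have hconn := wedge_connected (x := x) (y := y) h₁ h₂
  have inl_inr (a : V₁) (t : V₂) :
      (wedge G₁ G₂ x y).dist (wedgeInl G₁ G₂ x y a) (wedgeInr G₁ G₂ x y t) ≤
        G₁.dist a x + G₂.dist y t :=
    hconn.dist_triangle.trans <| add_le_add (dist_map_le _ (h₁ a x))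
      (wedgeInr_self G₁ G₂ x y ▸ dist_map_le _ (h₂ y t))
  refine le_antisymm ?_ ?_
  · rcases wedge_mem_range_inl_or_inr G₁ G₂ x u with ⟨a, rfl⟩ | ⟨s, rfl⟩ <;>
      rcases wedge_mem_range_inl_or_inr G₁ G₂ x w with ⟨b, rfl⟩ | ⟨t, rfl⟩ <;>
      simp only [wedgeRetractLeft_wedgeInl, wedgeRetractRight_wedgeInl, wedgeRetractLeft_wedgeInr,
        wedgeRetractRight_wedgeInr, SimpleGraph.dist_self, add_zero, zero_add]
    · exact dist_map_le _ (h₁ a b)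
    · exact inl_inr a t
    · rw [SimpleGraph.dist_comm, G₁.dist_comm, G₂.dist_comm]
      exact inl_inr b s
    · exact dist_map_le _ (h₂ s t)
  · -- the right-hand side grows by at most one along each edge of the wedge
    simpa using Reachable.le_add_dist_of_lipschitz
      (fun p q h => wedge_dist_lipschitz (wedgeRetractLeft x u.1) (wedgeRetractRight y u.1) h)
      (hconn u w)

end Wedge

theorem Fintype.sum_subtype_ne_add {α M : Type*} [Fintype α] [DecidableEq α] [AddCommMonoid M]
    (z : α) [Fintype {v // v ≠ z}] (F : α → M) : ∑ u : {v // v ≠ z}, F u + F z = ∑ v, F v := by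
  rw [← Finset.sum_subtype (univ.erase z) (by simp) F, Finset.sum_erase_add _ _ (mem_univ z)]

section WedgeSum

variable {V₁ V₂ : Type*} [Fintype V₁] [Fintype V₂] {G₁ : SimpleGraph V₁} {G₂ : SimpleGraph V₂}
  {x : V₁} {y : V₂} [Fintype {v : V₁ ⊕ V₂ // v ≠ Sum.inr y}]

theorem sum_wedgeRetractLeft (h : V₁ → ℕ) :
    ∑ u : {v : V₁ ⊕ V₂ // v ≠ Sum.inr y}, h (wedgeRetractLeft x u.1) =
      ∑ a, h a + (Fintype.card V₂ - 1) * h x := by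
  classical
  have hsplit := Fintype.sum_subtype_ne_add (Sum.inr y) (fun v => h (wedgeRetractLeft x v))
  obtain ⟨k, hk⟩ := Nat.exists_eq_add_one_of_ne_zero (Fintype.card_pos_iff.mpr ⟨y⟩).ne'
  simp only [Fintype.sum_sum_type, wedgeRetractLeft, Sum.elim_inl, Sum.elim_inr, id,
    Finset.sum_const, Finset.card_univ, smul_eq_mul, hk] at hsplit ⊢
  rw [Nat.add_sub_cancel, add_mul, one_mul] at *
  omega

theorem sum_wedgeRetractRight [Nonempty V₁] (h : V₂ → ℕ) :
    ∑ u : {v : V₁ ⊕ V₂ // v ≠ Sum.inr y}, h (wedgeRetractRight y u.1) =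
      ∑ t, h t + (Fintype.card V₁ - 1) * h y := by
  classical
  have hsplit :=
    Fintype.sum_subtype_ne_add (Sum.inr y) (fun v => h (wedgeRetractRight (V₁ := V₁) y v))
  obtain ⟨k, hk⟩ := Nat.exists_eq_add_one_of_ne_zero (Fintype.card_ne_zero (α := V₁))
  simp only [Fintype.sum_sum_type, wedgeRetractRight, Sum.elim_inl, Sum.elim_inr, id,
    Finset.sum_const, Finset.card_univ, smul_eq_mul, hk] at hsplit ⊢
  rw [Nat.add_sub_cancel, add_mul, one_mul] at *
  omega

theorem wedge_sum_dist_left :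
    ∑ u : {v : V₁ ⊕ V₂ // v ≠ Sum.inr y}, ∑ w : {v : V₁ ⊕ V₂ // v ≠ Sum.inr y},
        G₁.dist (wedgeRetractLeft x u.1) (wedgeRetractLeft x w.1) =
      ∑ a, ∑ b, G₁.dist a b + 2 * ((Fintype.card V₂ - 1) * ∑ b, G₁.dist x b) := by
  rw [Finset.sum_congr rfl fun u _ => sum_wedgeRetractLeft (G₁.dist (wedgeRetractLeft x u.1)),
    sum_wedgeRetractLeft fun a => ∑ b, G₁.dist a b + (Fintype.card V₂ - 1) * G₁.dist a x]
  simp only [Finset.sum_add_distrib, ← Finset.mul_sum, SimpleGraph.dist_self, mul_zero, add_zero,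
    G₁.dist_comm (v := x)]
  ring

theorem wedge_sum_dist_right [Nonempty V₁] :
    ∑ u : {v : V₁ ⊕ V₂ // v ≠ Sum.inr y}, ∑ w : {v : V₁ ⊕ V₂ // v ≠ Sum.inr y},
        G₂.dist (wedgeRetractRight y u.1) (wedgeRetractRight y w.1) =
      ∑ s, ∑ t, G₂.dist s t + 2 * ((Fintype.card V₁ - 1) * ∑ t, G₂.dist y t) := by
  rw [Finset.sum_congr rfl fun u _ => sum_wedgeRetractRight (G₂.dist (wedgeRetractRight y u.1)),
    sum_wedgeRetractRight fun s => ∑ t, G₂.dist s t + (Fintype.card V₁ - 1) * G₂.dist s y]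
  simp only [Finset.sum_add_distrib, ← Finset.mul_sum, SimpleGraph.dist_self, mul_zero, add_zero,
    G₂.dist_comm (v := y)]
  ring

theorem wedge_sum_dist (h₁ : G₁.Connected) (h₂ : G₂.Connected) :
    ∑ u, ∑ w, (wedge G₁ G₂ x y).dist u w =
      ∑ a, ∑ b, G₁.dist a b + ∑ s, ∑ t, G₂.dist s t +
        2 * ((Fintype.card V₂ - 1) * ∑ b, G₁.dist x b +
          (Fintype.card V₁ - 1) * ∑ t, G₂.dist y t) := by
  have : Nonempty V₁ := ⟨x⟩
  simp only [wedge_dist h₁ h₂, Finset.sum_add_distrib, wedge_sum_dist_left, wedge_sum_dist_right]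
  ring

end WedgeSum

theorem Fin.sum_sum_univ_eq_sum_sum_range {M : Type*} [AddCommMonoid M] (F : ℕ → ℕ → M) (n : ℕ) :
    ∑ s : Fin n, ∑ t : Fin n, F s t = ∑ s ∈ range n, ∑ t ∈ range n, F s t :=
  (Finset.sum_congr rfl fun (s : Fin n) _ => Fin.sum_univ_eq_sum_range (F s) n).trans
    (Fin.sum_univ_eq_sum_range (fun s => ∑ t ∈ range n, F s t) n)

namespace Tstar

variable (a b : ℕ)

def depth (s : ℕ) : ℕ := if s = 0 then 0 else if s ≤ a + b then 1 else 2

/-- The depth-one vertex on the path from the root to `s ≠ 0`. -/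
def leg (s : ℕ) : ℕ := if s ≤ a + b then s else s - (a + b)

/-- The depth of the last common vertex of the root paths of `s` and `t`. -/
def meetDepth (s t : ℕ) : ℕ := if leg a b s = leg a b t then min (depth a b s) (depth a b t) else 0

def treeDist (s t : ℕ) : ℕ := depth a b s + depth a b t - 2 * meetDepth a b s t

def IsChild (s t : ℕ) : Prop := (s = 0 ∧ 1 ≤ t ∧ t ≤ a + b) ∨ (1 ≤ s ∧ s ≤ a ∧ t = s + a + b)

theorem adj_iff {s t : Fin (2 * a + b + 1)} :
    (Tstar a b).Adj s t ↔ s ≠ t ∧ (IsChild a b s t ∨ IsChild a b t s) := by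
  simp only [Tstar, fromRel_adj, IsChild]

variable {a b}

theorem eq_of_treeDist_eq_zero {s t : ℕ} (hs : s ≤ 2 * a + b) (h : treeDist a b s t = 0) :
    s = t := by
  simp only [treeDist, meetDepth, depth, leg] at h
  split_ifs at h <;> omega

theorem treeDist_le_of_isChild {s v w : ℕ} (h : IsChild a b v w ∨ IsChild a b w v) :
    treeDist a b s w ≤ treeDist a b s v + 1 := by
  simp only [IsChild] at h
  simp only [treeDist, meetDepth, depth, leg]
  split_ifs <;> omega

theorem exists_isChild_treeDist_add_one {s t : ℕ} (hs : s ≤ 2 * a + b) (ht : t ≤ 2 * a + b)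
    (h : treeDist a b s t ≠ 0) :
    ∃ w ≤ 2 * a + b, w ≠ t ∧ (IsChild a b w t ∨ IsChild a b t w) ∧
      treeDist a b s w + 1 = treeDist a b s t := by
  simp only [IsChild]
  simp only [treeDist, meetDepth, depth, leg] at h
  by_cases ht0 : t = 0
  · refine ⟨leg a b s, ?_⟩
    simp only [treeDist, meetDepth, depth, leg]
    split_ifs at h ⊢ <;> omega
  by_cases hdeep : a + b < t
  · refine ⟨t - (a + b), ?_⟩
    simp only [treeDist, meetDepth, depth, leg]
    split_ifs at h ⊢ <;> omega
  by_cases hchild : s = t + a + b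
  · refine ⟨s, ?_⟩
    simp only [treeDist, meetDepth, depth, leg]
    split_ifs at h ⊢ <;> omega
  · refine ⟨0, ?_⟩
    simp only [treeDist, meetDepth, depth, leg, Nat.zero_le, ↓reduceIte, true_and]
    split_ifs at h ⊢ <;> omega

theorem dist_eq (s t : Fin (2 * a + b + 1)) : (Tstar a b).dist s t = treeDist a b s t := by
  have hle : ∀ v : Fin (2 * a + b + 1), v.val ≤ 2 * a + b := fun v => Nat.lt_succ_iff.mp v.isLt
  refine dist_eq_of_lipschitz_of_descent (f := fun t : Fin (2 * a + b + 1) => treeDist a b s t)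
    ?_ ?_ ?_ ?_ t
  · simp only [treeDist, meetDepth, depth, leg]; split_ifs <;> omega
  · exact fun t h => Fin.ext (eq_of_treeDist_eq_zero (hle s) h).symm
  · exact fun v w h => treeDist_le_of_isChild ((adj_iff a b).mp h).2
  · intro t h
    obtain ⟨w, hw, hwt, hadj, hdist⟩ := exists_isChild_treeDist_add_one (hle s) (hle t) h
    exact ⟨⟨w, Nat.lt_succ_of_le hw⟩, (adj_iff a b).mpr ⟨fun h => hwt (congrArg Fin.val h), hadj⟩,
      hdist⟩

variable (a b)

theorem sum_range_eq_of_classes (f : ℕ → ℕ) {c₁ c₂ c₃ : ℕ}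
    (h₁ : ∀ s, 1 ≤ s → s ≤ a → f s = c₁) (h₂ : ∀ s, a < s → s ≤ a + b → f s = c₂)
    (h₃ : ∀ s, a + b < s → s ≤ 2 * a + b → f s = c₃) :
    ∑ s ∈ range (2 * a + b + 1), f s = f 0 + a * c₁ + b * c₂ + a * c₃ := by
  have block : ∀ {lo hi c}, (∀ s, lo ≤ s → s < hi → f s = c) →
      ∑ s ∈ Ico lo hi, f s = (hi - lo) * c := fun h => by
    rw [Finset.sum_congr rfl fun s hs => h s (mem_Ico.mp hs).1 (mem_Ico.mp hs).2, sum_const,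
      Nat.card_Ico, smul_eq_mul]
  rw [range_eq_Ico, ← sum_Ico_consecutive _ (Nat.zero_le 1) (by omega : 1 ≤ 2 * a + b + 1),
    ← sum_Ico_consecutive _ (by omega : 1 ≤ a + 1) (by omega : a + 1 ≤ 2 * a + b + 1),
    ← sum_Ico_consecutive _ (by omega : a + 1 ≤ a + b + 1) (by omega : a + b + 1 ≤ 2 * a + b + 1),
    block (lo := 1) (hi := a + 1) fun s h h' => h₁ s h (by omega),
    block (lo := a + 1) (hi := a + b + 1) fun s h h' => h₂ s (by omega) (by omega),
    block (lo := a + b + 1) (hi := 2 * a + b + 1) fun s h h' => h₃ s (by omega) (by omega),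
    Nat.Ico_zero_eq_range, range_one, sum_singleton]
  rw [show a + 1 - 1 = a by omega, show a + b + 1 - (a + 1) = b by omega,
    show 2 * a + b + 1 - (a + b + 1) = a by omega, add_assoc, add_assoc]

theorem sum_depth : ∑ s ∈ range (2 * a + b + 1), depth a b s = 3 * a + b := by
  rw [sum_range_eq_of_classes a b _ (c₁ := 1) (c₂ := 1) (c₃ := 2)] <;> intros <;>
    simp only [depth] <;> split_ifs <;> omega

/-- The other vertex on the leg of `s`, when that leg has two vertices. -/
def mate (s : ℕ) : ℕ := if s ≤ a then s + a + b else s - (a + b)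

def onLongLeg (s : ℕ) : ℕ := if (1 ≤ s ∧ s ≤ a) ∨ a + b < s then 1 else 0

theorem meetDepth_eq {s t : ℕ} (hs : s ≤ 2 * a + b) (ht : t ≤ 2 * a + b) :
    meetDepth a b s t =
      (if s = t then depth a b s else 0) + (if mate a b s = t then onLongLeg a b s else 0) := by
  simp only [meetDepth, depth, leg, mate, onLongLeg]; split_ifs <;> omega

theorem sum_meetDepth {s : ℕ} (hs : s ≤ 2 * a + b) :
    ∑ t ∈ range (2 * a + b + 1), meetDepth a b s t = depth a b s + onLongLeg a b s := by
  rw [Finset.sum_congr rfl fun t ht => meetDepth_eq a b hs (Nat.lt_succ_iff.mp (mem_range.mp ht)),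
    sum_add_distrib, sum_ite_eq, sum_ite_eq, if_pos (mem_range.mpr (by omega)),
    if_pos (mem_range.mpr (by simp only [mate]; split_ifs <;> omega))]

theorem sum_sum_meetDepth :
    ∑ s ∈ range (2 * a + b + 1), ∑ t ∈ range (2 * a + b + 1), meetDepth a b s t = 5 * a + b := by
  rw [Finset.sum_congr rfl fun s hs => sum_meetDepth a b (Nat.lt_succ_iff.mp (mem_range.mp hs)),
    sum_range_eq_of_classes a b _ (c₁ := 2) (c₂ := 1) (c₃ := 3)] <;> intros <;>
    simp only [depth, onLongLeg] <;> split_ifs <;> omega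

theorem sum_dist_root : ∑ t, (Tstar a b).dist 0 t = 3 * a + b := by
  have hroot : ∀ t, treeDist a b 0 t = depth a b t := by
    intro t; simp only [treeDist, depth, meetDepth, leg]; split_ifs <;> omega
  simp only [dist_eq, Fin.val_zero, hroot]
  rw [Fin.sum_univ_eq_sum_range (depth a b), sum_depth]

theorem sum_sum_dist :
    ∑ s, ∑ t, (Tstar a b).dist s t + 2 * (5 * a + b) = 2 * (2 * a + b + 1) * (3 * a + b) := by
  have hsplit : ∀ s t, treeDist a b s t + 2 * meetDepth a b s t = depth a b s + depth a b t := by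
    intro s t; simp only [treeDist, meetDepth]; split_ifs <;> omega
  simp only [dist_eq]
  rw [Fin.sum_sum_univ_eq_sum_sum_range (treeDist a b), ← sum_sum_meetDepth a b, mul_sum]
  simp only [mul_sum, ← sum_add_distrib, hsplit]
  simp only [sum_add_distrib, sum_const, card_range, smul_eq_mul, ← mul_sum, sum_depth]
  ring

theorem connected : (Tstar a b).Connected := by
  refine (connected_iff_exists_forall_reachable _).mpr ⟨0, fun t => ?_⟩
  by_cases ht : t = 0
  · exact ht ▸ Reachable.refl _
  · refine Reachable.of_dist_ne_zero ?_
    rw [dist_eq, Fin.val_zero]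
    have : t.val ≠ 0 := fun h => ht (Fin.ext h)
    simp only [treeDist, depth, meetDepth, leg]; split_ifs <;> omega

end Tstar

theorem sum_dist_wedge_Tstar {V : Type*} [Fintype V] [DecidableEq V] {G : SimpleGraph V}
    (hG : G.Connected) (x : V) (a b : ℕ) :
    ∑ u, ∑ w, (wedge G (Tstar a b) x ⟨0, by omega⟩).dist u w + 2 * (5 * a + b) =
      ∑ u, ∑ w, G.dist u w + 2 * (2 * a + b + 1) * (3 * a + b) +
        2 * ((2 * a + b) * ∑ w, G.dist x w + (Fintype.card V - 1) * (3 * a + b)) := by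
  have hroot : ∑ t, (Tstar a b).dist ⟨0, by omega⟩ t = 3 * a + b := Tstar.sum_dist_root a b
  rw [wedge_sum_dist hG (Tstar.connected a b), Fintype.card_fin, Nat.add_sub_cancel, hroot,
    ← Tstar.sum_sum_dist a b]
  ring

/-- Moving one pendant vertex: for odd `g` and matching number `β = a₁ + (g−1)/2` with
`n = 2a₁ + g ≥ 2β ≥ 3g` and `a₁ ≥ 2`,
`W(U(T*_{a₁,0}, T*_{0,0},…,T*_{0,0})) > W(U(T*_{a₁−1,2}, T*_{0,0},…,T*_{0,0}))`,
where `U(S, T*_{0,0},…,T*_{0,0})` is the wedge of the cycle `C_g` and `S` at its root. -/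
theorem wiener_move_pendant (g a : ℕ) [NeZero g] (ha : 2 ≤ a) :
    wienerIndex (wedge (SimpleGraph.cycleGraph g) (Tstar (a - 1) 2) 0 ⟨0, by omega⟩) <
      wienerIndex (wedge (SimpleGraph.cycleGraph g) (Tstar a 0) 0 ⟨0, by omega⟩) := by
  have hC : (cycleGraph g).Connected := ⟨cycleGraph_preconnected⟩
  have h₁ := sum_dist_wedge_Tstar hC 0 a 0
  have h₂ := sum_dist_wedge_Tstar hC 0 (a - 1) 2
  unfold wienerIndex
  generalize ∑ u, ∑ w, (wedge (cycleGraph g) (Tstar a 0) 0 ⟨0, _⟩).dist u w = S₁ at h₁ ⊢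
  generalize ∑ u, ∑ w, (wedge (cycleGraph g) (Tstar (a - 1) 2) 0 ⟨0, _⟩).dist u w = S₂ at h₂ ⊢
  obtain ⟨k, rfl⟩ : ∃ k, a = k + 2 := ⟨a - 2, by omega⟩
  obtain ⟨m, rfl⟩ : ∃ m, g = m + 1 := ⟨g - 1, (Nat.succ_pred_eq_of_ne_zero (NeZero.ne g)).symm⟩
  simp only [Fintype.card_fin, Nat.add_sub_cancel, show k + 2 - 1 = k + 1 by omega] at h₁ h₂
  have key : S₂ + 2 * (2 * k + m + 2) = S₁ := by linarith
  omega
end
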